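/- arXiv:1403.4916 — 10 statements merged into one kernel-verified Lean document; each statement's English description precedes it below -/
import Mathlib

section
/- Let M = (S, ℒ) be a partial Steiner triple system which is a (ν, r, b, 3)-configuration, i.e. S has ν points, every point lies on exactly r lines, ℒ has b lines, and every line has exactly 3 points. Then for every integer m > 2 the configuration m-weaved from M, Π(m,M), is an (mν, 3r, 3mb, 3)-configuration: it has m·ν points, every point lies on exactly 3r lines, it has 3m·b lines, every line has exactly 3 points, and moreover Π(m,M) is itself a partial Steiner triple system (any two of its distinct points lie on at most one common line). -/
/-- A partial Steiner triple system on point set `P`, given by its set of lines: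
every line has exactly 3 points, and any two distinct points lie on at most one
common line. -/
def IsPSTS {P : Type*} (L : Set (Set P)) : Prop :=
  (∀ l ∈ L, l.ncard = 3) ∧
  ∀ l₁ ∈ L, ∀ l₂ ∈ L, ∀ p q : P, p ≠ q → p ∈ l₁ → q ∈ l₁ → p ∈ l₂ → q ∈ l₂ → l₁ = l₂

/-- The lines of the configuration `m`-weaved from a PSTS with line set `L`:
sets `{(a,i),(b,j),(c,k)}` with `{a,b,c} ∈ L` and `(i,j,k)` satisfying
`i=j=k-1` or `i=k=j-1` or `j=k=i-1` in `C_m = ZMod m`. -/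
def weaveLines {P : Type*} (m : ℕ) (L : Set (Set P)) : Set (Set (P × ZMod m)) :=
  { w | ∃ (a b c : P) (i j k : ZMod m), ({a, b, c} : Set P) ∈ L ∧
      ((i = j ∧ i = k - 1) ∨ (i = k ∧ i = j - 1) ∨ (j = k ∧ j = i - 1)) ∧
      w = {(a, i), (b, j), (c, k)} }

/-- `L` is a `(ν, r, b, 3)`-configuration: there are `ν` points, every point lies on
exactly `r` lines, there are `b` lines, and every line has exactly `3` points. -/
def IsConfiguration {P : Type*} (L : Set (Set P)) (ν r b : ℕ) : Prop :=
  Nat.card P = ν ∧ (∀ p : P, {l ∈ L | p ∈ l}.ncard = r) ∧ L.ncard = b ∧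
  ∀ l ∈ L, l.ncard = 3

namespace WeaveAux

variable {P : Type*}

def Fw (m : ℕ) (q : (Set P × P) × ZMod m) : Set (P × ZMod m) :=
  ((fun y => (y, q.2)) '' (q.1.1 \ {q.1.2})) ∪ {(q.1.2, q.2 + 1)}

lemma self_ne_add_one {m : ℕ} (hm : 2 < m) (t : ZMod m) : t ≠ t + 1 := by
  intro h
  have h1 : (1 : ZMod m) = 0 := left_eq_add.mp h
  have h2 : ((1 : ℕ) : ZMod m) = 0 := by exact_mod_cast h1
  have := Nat.le_of_dvd one_pos ((ZMod.natCast_eq_zero_iff 1 m).mp h2)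
  omega

lemma not_both {m : ℕ} (hm : 2 < m) {t t' : ZMod m} (h1 : t = t' + 1) (h2 : t' = t + 1) :
    False := by
  rw [h2, add_assoc] at h1
  have h3 : (1 + 1 : ZMod m) = 0 := left_eq_add.mp h1
  have h4 : ((2 : ℕ) : ZMod m) = 0 := by push_cast; linear_combination h3
  have := Nat.le_of_dvd two_pos ((ZMod.natCast_eq_zero_iff 2 m).mp h4)
  omega

lemma triple_ne {a b c : P} (h : ({a, b, c} : Set P).ncard = 3) :
    a ≠ b ∧ a ≠ c ∧ b ≠ c := by
  refine ⟨?_, ?_, ?_⟩ <;> rintro rfl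
  · have h2 : ({a, a, c} : Set P) = {a, c} := by simp
    rw [h2] at h
    have := Set.ncard_insert_le a ({c} : Set P)
    simp [Set.ncard_singleton] at this
    omega
  · have h2 : ({a, b, a} : Set P) = {a, b} := by ext y; simp; tauto
    rw [h2] at h
    have := Set.ncard_insert_le a ({b} : Set P)
    simp [Set.ncard_singleton] at this
    omega
  · have h2 : ({a, b, b} : Set P) = {a, b} := by simp
    rw [h2] at h
    have := Set.ncard_insert_le a ({b} : Set P)
    simp [Set.ncard_singleton] at this
    omega

lemma Fw_eq {m : ℕ} {a b x : P} (hax : a ≠ x) (hbx : b ≠ x) (t : ZMod m) :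
    Fw m ((({a, b, x} : Set P), x), t) = {(a, t), (b, t), (x, t + 1)} := by
  have hdiff : ({a, b, x} : Set P) \ {x} = {a, b} := by
    ext y
    simp only [Set.mem_diff, Set.mem_insert_iff, Set.mem_singleton_iff]
    constructor
    · rintro ⟨rfl | rfl | rfl, h2⟩ <;> tauto
    · rintro (rfl | rfl) <;> tauto
  show ((fun y => (y, t)) '' (({a, b, x} : Set P) \ {x})) ∪ {(x, t + 1)} = _
  rw [hdiff, Set.image_pair]
  ext z
  simp only [Set.mem_union, Set.mem_insert_iff, Set.mem_singleton_iff]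
  tauto

lemma key_inj {m : ℕ} (hm : 2 < m) {a b c a' b' c' : P} {t t' : ZMod m}
    (h : ({(a, t), (b, t), (c, t + 1)} : Set (P × ZMod m)) =
      {(a', t'), (b', t'), (c', t' + 1)}) :
    t = t' ∧ c = c' ∧ ({a, b, c} : Set P) = {a', b', c'} := by
  have mem : ∀ z : P × ZMod m, z ∈ ({(a, t), (b, t), (c, t + 1)} : Set (P × ZMod m)) ↔
      z ∈ ({(a', t'), (b', t'), (c', t' + 1)} : Set (P × ZMod m)) := fun z => by rw [h]
  have ha := (mem (a, t)).mp (by simp)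
  have hb := (mem (b, t)).mp (by simp)
  have hc := (mem (c, t + 1)).mp (by simp)
  have ha' := (mem (a', t')).mpr (by simp)
  have hb' := (mem (b', t')).mpr (by simp)
  simp only [Set.mem_insert_iff, Set.mem_singleton_iff, Prod.mk.injEq] at ha hb hc ha' hb'
  have ht : t = t' := by
    rcases ha with ⟨_, ht⟩ | ⟨_, ht⟩ | ⟨_, ht⟩
    · exact ht
    · exact ht
    · rcases ha' with ⟨_, ht'⟩ | ⟨_, ht'⟩ | ⟨_, ht'⟩
      · exact ht'.symm
      · exact ht'.symm
      · exact (not_both hm ht ht').elim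
  subst ht
  have hcc : c = c' := by
    rcases hc with ⟨_, h2⟩ | ⟨_, h2⟩ | ⟨h2, _⟩
    · exact absurd h2.symm (self_ne_add_one hm t)
    · exact absurd h2.symm (self_ne_add_one hm t)
    · exact h2
  have haa : a = a' ∨ a = b' := by
    rcases ha with ⟨h2, _⟩ | ⟨h2, _⟩ | ⟨_, h2⟩
    · exact Or.inl h2
    · exact Or.inr h2
    · exact absurd h2 (self_ne_add_one hm t)
  have hbb : b = a' ∨ b = b' := by
    rcases hb with ⟨h2, _⟩ | ⟨h2, _⟩ | ⟨_, h2⟩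
    · exact Or.inl h2
    · exact Or.inr h2
    · exact absurd h2 (self_ne_add_one hm t)
  have haa' : a' = a ∨ a' = b := by
    rcases ha' with ⟨h2, _⟩ | ⟨h2, _⟩ | ⟨_, h2⟩
    · exact Or.inl h2
    · exact Or.inr h2
    · exact absurd h2 (self_ne_add_one hm t)
  have hbb' : b' = a ∨ b' = b := by
    rcases hb' with ⟨h2, _⟩ | ⟨h2, _⟩ | ⟨_, h2⟩
    · exact Or.inl h2
    · exact Or.inr h2
    · exact absurd h2 (self_ne_add_one hm t)
  refine ⟨rfl, hcc, ?_⟩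
  subst hcc
  apply Set.Subset.antisymm
  · intro y hy
    simp only [Set.mem_insert_iff, Set.mem_singleton_iff] at hy ⊢
    rcases hy with rfl | rfl | rfl
    · rcases haa with rfl | rfl
      · exact Or.inl rfl
      · exact Or.inr (Or.inl rfl)
    · rcases hbb with rfl | rfl
      · exact Or.inl rfl
      · exact Or.inr (Or.inl rfl)
    · exact Or.inr (Or.inr rfl)
  · intro y hy
    simp only [Set.mem_insert_iff, Set.mem_singleton_iff] at hy ⊢
    rcases hy with rfl | rfl | rfl
    · rcases haa' with rfl | rfl
      · exact Or.inl rfl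
      · exact Or.inr (Or.inl rfl)
    · rcases hbb' with rfl | rfl
      · exact Or.inl rfl
      · exact Or.inr (Or.inl rfl)
    · exact Or.inr (Or.inr rfl)

lemma decomp {L : Set (Set P)} (h3 : ∀ l ∈ L, l.ncard = 3) {ℓ : Set P} (hℓ : ℓ ∈ L)
    {x : P} (hx : x ∈ ℓ) :
    ∃ a b : P, a ≠ b ∧ a ≠ x ∧ b ≠ x ∧ ℓ = {a, b, x} := by
  obtain ⟨u, v, w, huv, huw, hvw, rfl⟩ := Set.ncard_eq_three.mp (h3 ℓ hℓ)
  simp only [Set.mem_insert_iff, Set.mem_singleton_iff] at hx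
  rcases hx with rfl | rfl | rfl
  · exact ⟨v, w, hvw, fun h => huv h.symm, fun h => huw h.symm, by
      ext y; simp only [Set.mem_insert_iff, Set.mem_singleton_iff]; tauto⟩
  · exact ⟨u, w, huw, huv, fun h => hvw h.symm, by
      ext y; simp only [Set.mem_insert_iff, Set.mem_singleton_iff]; tauto⟩
  · exact ⟨u, v, huv, huw, hvw, rfl⟩

lemma ncard_sigma [Finite P] (A : Set (Set P)) (hA : ∀ ℓ ∈ A, ℓ.ncard = 3) :
    {q : Set P × P | q.1 ∈ A ∧ q.2 ∈ q.1}.ncard = 3 * A.ncard := by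
  classical
  letI : Fintype P := Fintype.ofFinite P
  have hS : {q : Set P × P | q.1 ∈ A ∧ q.2 ∈ q.1}.Finite := Set.toFinite _
  have hAf : A.Finite := Set.toFinite _
  rw [Set.ncard_eq_toFinset_card _ hS, Set.ncard_eq_toFinset_card _ hAf]
  have heq : hS.toFinset =
      hAf.toFinset.biUnion (fun ℓ => ({ℓ} : Finset (Set P)) ×ˢ ℓ.toFinite.toFinset) := by
    ext q
    simp only [Set.Finite.mem_toFinset, Set.mem_setOf_eq, Finset.mem_biUnion,
      Finset.mem_product, Finset.mem_singleton]
    constructor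
    · rintro ⟨h1, h2⟩; exact ⟨q.1, h1, rfl, by simpa using h2⟩
    · rintro ⟨ℓ, h1, h2, h3'⟩; exact ⟨h2 ▸ h1, by rw [h2]; simpa using h3'⟩
  rw [heq, Finset.card_biUnion]
  · have : ∀ ℓ ∈ hAf.toFinset,
        (({ℓ} : Finset (Set P)) ×ˢ ℓ.toFinite.toFinset).card = 3 := by
      intro ℓ hℓ
      rw [Finset.card_product, Finset.card_singleton, one_mul,
        ← Set.ncard_eq_toFinset_card _ ℓ.toFinite]
      exact hA ℓ (hAf.mem_toFinset.mp hℓ)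
    rw [Finset.sum_congr rfl this, Finset.sum_const, smul_eq_mul, mul_comm]
  · intro ℓ₁ h1 ℓ₂ h2 hne
    simp only [Finset.disjoint_left, Finset.mem_product, Finset.mem_singleton]
    rintro q ⟨rfl, -⟩ ⟨h, -⟩
    exact hne h

lemma ncard_prod_univ {α β : Type*} [Finite α] [Finite β] (s : Set α) :
    (s ×ˢ (Set.univ : Set β)).ncard = s.ncard * Nat.card β := by
  rw [← Nat.card_coe_set_eq, ← Nat.card_coe_set_eq,
    Nat.card_congr (Equiv.Set.prod s Set.univ), Nat.card_prod]
  congr 1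
  rw [Nat.card_congr (Equiv.Set.univ β)]

end WeaveAux

open WeaveAux

/-- If `M` is a PSTS which is a `(ν,r,b,3)`-configuration and `m > 2`, then the
configuration `m`-weaved from `M` is an `(mν, 3r, 3mb, 3)`-configuration and is
itself a partial Steiner triple system. -/
theorem weave_isConfiguration {P : Type*} [Finite P] (L : Set (Set P)) (ν r b m : ℕ)
    (hM : IsPSTS L) (hconf : IsConfiguration L ν r b) (hm : 2 < m) :
    IsConfiguration (weaveLines m L) (m * ν) (3 * r) (3 * m * b) ∧
    IsPSTS (weaveLines m L) := by
  classical
  obtain ⟨hν, hr, hb, h3⟩ := hconf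
  haveI : NeZero m := ⟨by omega⟩
  set E : Set (Set P × P) := {q : Set P × P | q.1 ∈ L ∧ q.2 ∈ q.1} with hE
  -- the parametrization
  have hweq : weaveLines m L = Fw m '' (E ×ˢ (Set.univ : Set (ZMod m))) := by
    apply Set.Subset.antisymm
    · rintro w ⟨a, b, c, i, j, k, hL, hpat, rfl⟩
      obtain ⟨hab, hac, hbc⟩ := triple_ne (h3 _ hL)
      rcases hpat with ⟨rfl, hik⟩ | ⟨rfl, hij⟩ | ⟨rfl, hjk⟩
      · -- i = j, i = k - 1
        have hk : k = i + 1 := by rw [hik]; ring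
        subst hk
        refine ⟨((({a, b, c} : Set P), c), i), ⟨⟨hL, by simp⟩, trivial⟩, ?_⟩
        rw [Fw_eq hac hbc]
      · -- i = k, i = j - 1
        have hj : j = i + 1 := by rw [hij]; ring
        subst hj
        have hs : ({a, c, b} : Set P) = {a, b, c} := by
          ext y; simp only [Set.mem_insert_iff, Set.mem_singleton_iff]; tauto
        refine ⟨((({a, c, b} : Set P), b), i), ⟨⟨hs ▸ hL, by simp⟩, trivial⟩, ?_⟩
        rw [Fw_eq hab (Ne.symm hbc)]
        ext z; simp only [Set.mem_insert_iff, Set.mem_singleton_iff]; tauto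
      · -- j = k, j = i - 1
        have hi : i = j + 1 := by rw [hjk]; ring
        subst hi
        have hs : ({b, c, a} : Set P) = {a, b, c} := by
          ext y; simp only [Set.mem_insert_iff, Set.mem_singleton_iff]; tauto
        refine ⟨((({b, c, a} : Set P), a), j), ⟨⟨hs ▸ hL, by simp⟩, trivial⟩, ?_⟩
        rw [Fw_eq (Ne.symm hab) (Ne.symm hac)]
        ext z; simp only [Set.mem_insert_iff, Set.mem_singleton_iff]; tauto
    · rintro w ⟨⟨⟨ℓ, x⟩, t⟩, ⟨⟨hℓ, hx⟩, -⟩, rfl⟩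
      dsimp only at hℓ hx
      obtain ⟨a, b, hab, hax, hbx, rfl⟩ := decomp h3 hℓ hx
      exact ⟨a, b, x, t, t, t + 1, hℓ,
        Or.inl ⟨rfl, by rw [add_sub_cancel_right]⟩, Fw_eq hax hbx t⟩
  -- injectivity of the parametrization
  have hinj : Set.InjOn (Fw m) (E ×ˢ (Set.univ : Set (ZMod m))) := by
    rintro ⟨⟨ℓ, x⟩, t⟩ ⟨⟨hℓ, hx⟩, -⟩ ⟨⟨ℓ', x'⟩, t'⟩ ⟨⟨hℓ', hx'⟩, -⟩ heq
    dsimp only at hℓ hx hℓ' hx' heq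
    obtain ⟨a, b, hab, hax, hbx, rfl⟩ := decomp h3 hℓ hx
    obtain ⟨a', b', hab', hax', hbx', rfl⟩ := decomp h3 hℓ' hx'
    rw [Fw_eq hax hbx, Fw_eq hax' hbx'] at heq
    obtain ⟨ht, hxx, hset⟩ := key_inj hm heq
    simp only [Prod.mk.injEq]
    exact ⟨⟨hset, hxx⟩, ht⟩
  -- every weave line has 3 points
  have hw3 : ∀ l ∈ weaveLines m L, l.ncard = 3 := by
    intro l hl
    rw [hweq] at hl
    obtain ⟨⟨⟨ℓ, x⟩, t⟩, ⟨⟨hℓ, hx⟩, -⟩, rfl⟩ := hl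
    dsimp only at hℓ hx
    obtain ⟨a, b, hab, hax, hbx, rfl⟩ := decomp h3 hℓ hx
    rw [Fw_eq hax hbx]
    exact Set.ncard_eq_three.mpr ⟨(a, t), (b, t), (x, t + 1),
      fun h => hab (congrArg Prod.fst h),
      fun h => self_ne_add_one hm t (congrArg Prod.snd h),
      fun h => self_ne_add_one hm t (congrArg Prod.snd h), rfl⟩
  refine ⟨⟨?_, ?_, ?_, hw3⟩, hw3, ?_⟩
  · -- number of points
    rw [Nat.card_prod, hν, Nat.card_zmod, mul_comm]
  · -- lines through each point
    rintro ⟨p, s⟩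
    set Ap : Set (Set P) := {l ∈ L | p ∈ l} with hAp
    set Ep : Set (Set P × P) := {q : Set P × P | q.1 ∈ Ap ∧ q.2 ∈ q.1} with hEp
    set G : Set P × P → (Set P × P) × ZMod m :=
      fun q => (q, if q.2 = p then s - 1 else s) with hG
    have hGinj : Function.Injective G := by
      intro q q' h
      exact congrArg Prod.fst h
    have hsub : G '' Ep ⊆ E ×ˢ (Set.univ : Set (ZMod m)) := by
      rintro _ ⟨⟨ℓ, x⟩, ⟨⟨hℓL, hpℓ⟩, hx⟩, rfl⟩
      exact ⟨⟨hℓL, hx⟩, trivial⟩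
    have hset : {l ∈ weaveLines m L | (p, s) ∈ l} = Fw m '' (G '' Ep) := by
      apply Set.Subset.antisymm
      · rintro l ⟨hl, hpl⟩
        rw [hweq] at hl
        obtain ⟨⟨⟨ℓ, x⟩, t⟩, ⟨⟨hℓ, hx⟩, -⟩, rfl⟩ := hl
        dsimp only at hℓ hx
        obtain ⟨a, b, hab, hax, hbx, rfl⟩ := decomp h3 hℓ hx
        rw [Fw_eq hax hbx] at hpl
        simp only [Set.mem_insert_iff, Set.mem_singleton_iff, Prod.mk.injEq] at hpl
        rcases hpl with ⟨hpa, hst⟩ | ⟨hpb, hst⟩ | ⟨hpx, hst⟩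
        · have hxp : ¬ x = p := fun h => hax (hpa.symm.trans h.symm)
          have hGv : G (({a, b, x} : Set P), x) = ((({a, b, x} : Set P), x), t) := by
            simp only [hG]; rw [if_neg hxp, hst]
          refine ⟨G (({a, b, x} : Set P), x), ⟨(({a, b, x} : Set P), x), ⟨⟨hℓ, ?_⟩, hx⟩, rfl⟩, by rw [hGv]⟩
          · simp [hpa]
        · have hxp : ¬ x = p := fun h => hbx (hpb.symm.trans h.symm)
          have hGv : G (({a, b, x} : Set P), x) = ((({a, b, x} : Set P), x), t) := by
            simp only [hG]; rw [if_neg hxp, hst]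
          refine ⟨G (({a, b, x} : Set P), x), ⟨(({a, b, x} : Set P), x), ⟨⟨hℓ, ?_⟩, hx⟩, rfl⟩, by rw [hGv]⟩
          · simp [hpb]
        · have ht : t = s - 1 := by rw [hst, add_sub_cancel_right]
          have hGv : G (({a, b, x} : Set P), x) = ((({a, b, x} : Set P), x), t) := by
            simp only [hG]; rw [if_pos hpx.symm, ht]
          refine ⟨G (({a, b, x} : Set P), x), ⟨(({a, b, x} : Set P), x), ⟨⟨hℓ, ?_⟩, hx⟩, rfl⟩, by rw [hGv]⟩
          · simp [hpx]
      · rintro l ⟨y, ⟨⟨ℓ, x⟩, ⟨⟨hℓL, hpℓ⟩, hx⟩, rfl⟩, rfl⟩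
        refine ⟨?_, ?_⟩
        · rw [hweq]
          exact ⟨_, ⟨⟨hℓL, hx⟩, trivial⟩, rfl⟩
        · show (p, s) ∈ Fw m ((ℓ, x), if x = p then s - 1 else s)
          by_cases hxp : x = p
          · refine Or.inr ?_
            simp only [if_pos hxp, Set.mem_singleton_iff, Prod.mk.injEq]
            exact ⟨hxp.symm, by rw [sub_add_cancel]⟩
          · refine Or.inl ⟨p, ⟨hpℓ, fun h => hxp (Set.mem_singleton_iff.mp h).symm⟩, ?_⟩
            simp only [if_neg hxp]
    rw [hset, Set.ncard_image_of_injOn (hinj.mono hsub),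
      Set.ncard_image_of_injective _ hGinj,
      ncard_sigma Ap (fun ℓ hℓ => h3 ℓ hℓ.1), hr p]
  · -- number of lines
    rw [hweq, Set.ncard_image_of_injOn hinj, ncard_prod_univ, Nat.card_zmod,
      ncard_sigma L h3, hb]
    ring
  · -- the weave is a PSTS
    intro l₁ hl₁ l₂ hl₂ pt qt hne hp1 hq1 hp2 hq2
    rw [hweq] at hl₁ hl₂
    obtain ⟨⟨⟨ℓ, x⟩, t⟩, ⟨⟨hℓ, hx⟩, -⟩, rfl⟩ := hl₁
    obtain ⟨⟨⟨ℓ', x'⟩, t'⟩, ⟨⟨hℓ', hx'⟩, -⟩, rfl⟩ := hl₂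
    dsimp only at hℓ hx hℓ' hx'
    obtain ⟨a, b, hab, hax, hbx, hd⟩ := decomp h3 hℓ hx
    obtain ⟨a', b', hab', hax', hbx', hd'⟩ := decomp h3 hℓ' hx'
    obtain ⟨p1, p2⟩ := pt
    obtain ⟨q1, q2⟩ := qt
    subst hd
    subst hd'
    rw [Fw_eq hax hbx] at hp1 hq1
    rw [Fw_eq hax' hbx'] at hp2 hq2
    simp only [Set.mem_insert_iff, Set.mem_singleton_iff, Prod.mk.injEq] at hp1 hq1 hp2 hq2
    by_cases hpq : p1 = q1
    · exfalso
      subst hpq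
      have hne2 : p2 ≠ q2 := fun h => hne (by rw [h])
      rcases hp1 with ⟨e1, e2⟩ | ⟨e1, e2⟩ | ⟨e1, e2⟩ <;>
        rcases hq1 with ⟨f1, f2⟩ | ⟨f1, f2⟩ | ⟨f1, f2⟩ <;>
        first
          | exact hne2 (e2.trans f2.symm)
          | exact hab (e1.symm.trans f1)
          | exact hab (f1.symm.trans e1)
          | exact hax (e1.symm.trans f1)
          | exact hax (f1.symm.trans e1)
          | exact hbx (e1.symm.trans f1)
          | exact hbx (f1.symm.trans e1)
    · -- p1 ≠ q1 : base lines coincide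
      have hpℓ1 : p1 ∈ ({a, b, x} : Set P) := by
        rcases hp1 with ⟨e, _⟩ | ⟨e, _⟩ | ⟨e, _⟩ <;> simp [e]
      have hqℓ1 : q1 ∈ ({a, b, x} : Set P) := by
        rcases hq1 with ⟨e, _⟩ | ⟨e, _⟩ | ⟨e, _⟩ <;> simp [e]
      have hpℓ2 : p1 ∈ ({a', b', x'} : Set P) := by
        rcases hp2 with ⟨e, _⟩ | ⟨e, _⟩ | ⟨e, _⟩ <;> simp [e]
      have hqℓ2 : q1 ∈ ({a', b', x'} : Set P) := by
        rcases hq2 with ⟨e, _⟩ | ⟨e, _⟩ | ⟨e, _⟩ <;> simp [e]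
      have hℓeq : ({a, b, x} : Set P) = {a', b', x'} :=
        hM.2 _ hℓ _ hℓ' p1 q1 hpq hpℓ1 hqℓ1 hpℓ2 hqℓ2
      have htt : t = t' := by
        by_contra hne_t
        have hp2t : p2 = t ∨ p2 = t + 1 := by
          rcases hp1 with ⟨_, e⟩ | ⟨_, e⟩ | ⟨_, e⟩
          · exact Or.inl e
          · exact Or.inl e
          · exact Or.inr e
        have hp2t' : p2 = t' ∨ p2 = t' + 1 := by
          rcases hp2 with ⟨_, e⟩ | ⟨_, e⟩ | ⟨_, e⟩
          · exact Or.inl e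
          · exact Or.inl e
          · exact Or.inr e
        rcases hp2t with e | e <;> rcases hp2t' with f | f
        · exact hne_t (e.symm.trans f)
        · -- t = t' + 1
          have hA : t = t' + 1 := e.symm.trans f
          have hp1x : p1 = x' := by
            rcases hp2 with ⟨_, g⟩ | ⟨_, g⟩ | ⟨g, _⟩
            · exact absurd (e.symm.trans g) hne_t
            · exact absurd (e.symm.trans g) hne_t
            · exact g
          have hq1x : q1 = x' := by
            rcases hq2 with ⟨_, g'⟩ | ⟨_, g'⟩ | ⟨g', _⟩
            · rcases hq1 with ⟨_, g⟩ | ⟨_, g⟩ | ⟨_, g⟩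
              · exact absurd (g.symm.trans g') hne_t
              · exact absurd (g.symm.trans g') hne_t
              · exact (not_both hm hA (g'.symm.trans g)).elim
            · rcases hq1 with ⟨_, g⟩ | ⟨_, g⟩ | ⟨_, g⟩
              · exact absurd (g.symm.trans g') hne_t
              · exact absurd (g.symm.trans g') hne_t
              · exact (not_both hm hA (g'.symm.trans g)).elim
            · exact g'
          exact hpq (hp1x.trans hq1x.symm)
        · -- t' = t + 1
          have hB : t' = t + 1 := f.symm.trans e
          have hp1x : p1 = x := by
            rcases hp1 with ⟨_, g⟩ | ⟨_, g⟩ | ⟨g, _⟩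
            · exact absurd (g.symm.trans e) (self_ne_add_one hm t)
            · exact absurd (g.symm.trans e) (self_ne_add_one hm t)
            · exact g
          have hq1x : q1 = x := by
            rcases hq1 with ⟨_, g⟩ | ⟨_, g⟩ | ⟨g, g''⟩
            · rcases hq2 with ⟨_, g'⟩ | ⟨_, g'⟩ | ⟨_, g'⟩
              · exact absurd (g.symm.trans g') hne_t
              · exact absurd (g.symm.trans g') hne_t
              · exact (not_both hm (g.symm.trans g') hB).elim
            · rcases hq2 with ⟨_, g'⟩ | ⟨_, g'⟩ | ⟨_, g'⟩
              · exact absurd (g.symm.trans g') hne_t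
              · exact absurd (g.symm.trans g') hne_t
              · exact (not_both hm (g.symm.trans g') hB).elim
            · exact g
          exact hpq (hp1x.trans hq1x.symm)
        · exact hne_t (add_right_cancel (e.symm.trans f))
      subst htt
      have hxx : x = x' := by
        by_contra hxne
        have hp1' : p1 ≠ x ∧ p1 ≠ x' := by
          rcases hp1 with ⟨e1, e2⟩ | ⟨e1, e2⟩ | ⟨e1, e2⟩
          · refine ⟨fun h => hax (e1.symm.trans h), ?_⟩
            rcases hp2 with ⟨f1, f2⟩ | ⟨f1, f2⟩ | ⟨f1, f2⟩
            · exact fun h => hax' (f1.symm.trans h)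
            · exact fun h => hbx' (f1.symm.trans h)
            · exact absurd (e2.symm.trans f2) (self_ne_add_one hm t)
          · refine ⟨fun h => hbx (e1.symm.trans h), ?_⟩
            rcases hp2 with ⟨f1, f2⟩ | ⟨f1, f2⟩ | ⟨f1, f2⟩
            · exact fun h => hax' (f1.symm.trans h)
            · exact fun h => hbx' (f1.symm.trans h)
            · exact absurd (e2.symm.trans f2) (self_ne_add_one hm t)
          · rcases hp2 with ⟨f1, f2⟩ | ⟨f1, f2⟩ | ⟨f1, f2⟩
            · exact absurd (f2.symm.trans e2) (self_ne_add_one hm t)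
            · exact absurd (f2.symm.trans e2) (self_ne_add_one hm t)
            · exact absurd (e1.symm.trans f1) hxne
        have hq1' : q1 ≠ x ∧ q1 ≠ x' := by
          rcases hq1 with ⟨e1, e2⟩ | ⟨e1, e2⟩ | ⟨e1, e2⟩
          · refine ⟨fun h => hax (e1.symm.trans h), ?_⟩
            rcases hq2 with ⟨f1, f2⟩ | ⟨f1, f2⟩ | ⟨f1, f2⟩
            · exact fun h => hax' (f1.symm.trans h)
            · exact fun h => hbx' (f1.symm.trans h)
            · exact absurd (e2.symm.trans f2) (self_ne_add_one hm t)
          · refine ⟨fun h => hbx (e1.symm.trans h), ?_⟩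
            rcases hq2 with ⟨f1, f2⟩ | ⟨f1, f2⟩ | ⟨f1, f2⟩
            · exact fun h => hax' (f1.symm.trans h)
            · exact fun h => hbx' (f1.symm.trans h)
            · exact absurd (e2.symm.trans f2) (self_ne_add_one hm t)
          · rcases hq2 with ⟨f1, f2⟩ | ⟨f1, f2⟩ | ⟨f1, f2⟩
            · exact absurd (f2.symm.trans e2) (self_ne_add_one hm t)
            · exact absurd (f2.symm.trans e2) (self_ne_add_one hm t)
            · exact absurd (e1.symm.trans f1) hxne
        have hx'mem : x' ∈ ({a, b, x} : Set P) := by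
          rw [hℓeq]; simp
        simp only [Set.mem_insert_iff, Set.mem_singleton_iff] at hx'mem hpℓ1 hqℓ1
        rcases hx'mem with rfl | rfl | h
        · -- x' = a
          have hp1b : p1 = b := by
            rcases hpℓ1 with h | h | h
            · exact absurd h hp1'.2
            · exact h
            · exact absurd h hp1'.1
          have hq1b : q1 = b := by
            rcases hqℓ1 with h | h | h
            · exact absurd h hq1'.2
            · exact h
            · exact absurd h hq1'.1
          exact hpq (hp1b.trans hq1b.symm)
        · -- x' = b
          have hp1a : p1 = a := by
            rcases hpℓ1 with h | h | h
            · exact h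
            · exact absurd h hp1'.2
            · exact absurd h hp1'.1
          have hq1a : q1 = a := by
            rcases hqℓ1 with h | h | h
            · exact h
            · exact absurd h hq1'.2
            · exact absurd h hq1'.1
          exact hpq (hp1a.trans hq1a.symm)
        · exact hxne h.symm
      subst hxx
      rw [hℓeq]
end

section
/- Let M = (S, ℒ) be a partial Steiner triple system which is a (ν, r, b, 3)-configuration (ν points, every point on exactly r lines, b lines, every line with exactly 3 points), let G be a finite abelian group of order q and ε ∈ G. Then the convolution M⋈_ε G is a (qν, qr, q²b, 3)-configuration: it has q·ν points, every point lies on exactly q·r lines, it has q²·b lines, every line has exactly 3 points, and M⋈_ε G is itself a partial Steiner triple system. -/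
/-- The lines of the convolution `M ⋈_ε G` of a PSTS with line set `L` and an abelian
group `G`: the sets `{(x,α),(y,β),(z,γ)}` with `{x,y,z} ∈ L` and `α+β+γ = ε`. -/
def convLines {P G : Type*} [AddCommGroup G] (ε : G) (L : Set (Set P)) :
    Set (Set (P × G)) :=
  { w | ∃ (x y z : P) (α β γ : G), ({x, y, z} : Set P) ∈ L ∧ α + β + γ = ε ∧
      w = {(x, α), (y, β), (z, γ)} }

set_option linter.unusedSectionVars false
section aux
variable {P G : Type*} [AddCommGroup G]

private lemma mem3 {x y z p : P} {α β γ v : G} :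
    (p, v) ∈ ({(x, α), (y, β), (z, γ)} : Set (P × G)) ↔
      (p = x ∧ v = α) ∨ (p = y ∧ v = β) ∨ (p = z ∧ v = γ) := by
  simp [Prod.ext_iff]

private lemma pne {x y : P} (h : x ≠ y) (α β : G) : (x, α) ≠ (y, β) :=
  fun h' => h (congrArg Prod.fst h')

private lemma val_x {x y z : P} (hxy : x ≠ y) (hxz : x ≠ z) {α β γ v : G}
    (h : (x, v) ∈ ({(x, α), (y, β), (z, γ)} : Set (P × G))) : v = α := by
  rcases mem3.1 h with ⟨_, h⟩ | ⟨h, _⟩ | ⟨h, _⟩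
  · exact h
  · exact absurd h hxy
  · exact absurd h hxz

private lemma val_y {x y z : P} (hxy : x ≠ y) (hyz : y ≠ z) {α β γ v : G}
    (h : (y, v) ∈ ({(x, α), (y, β), (z, γ)} : Set (P × G))) : v = β := by
  rcases mem3.1 h with ⟨h, _⟩ | ⟨_, h⟩ | ⟨h, _⟩
  · exact absurd h hxy.symm
  · exact h
  · exact absurd h hyz

private lemma fun3 {x y z : P} (hxy : x ≠ y) (hxz : x ≠ z) (hyz : y ≠ z)
    {α β γ : G} {p : P} {v v' : G}
    (h : (p, v) ∈ ({(x, α), (y, β), (z, γ)} : Set (P × G)))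
    (h' : (p, v') ∈ ({(x, α), (y, β), (z, γ)} : Set (P × G))) : v = v' := by
  rcases mem3.1 h with ⟨rfl, rfl⟩ | ⟨rfl, rfl⟩ | ⟨rfl, rfl⟩ <;>
    rcases mem3.1 h' with ⟨h1, h2⟩ | ⟨h1, h2⟩ | ⟨h1, h2⟩ <;> simp_all

private lemma fst_image {x y z : P} {α β γ : G} :
    Prod.fst '' ({(x, α), (y, β), (z, γ)} : Set (P × G)) = {x, y, z} := by
  simp [Set.image_insert_eq]

private lemma ncard_pair_le (a b : P) : ({a, b} : Set P).ncard ≤ 2 := by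
  have h := Set.ncard_insert_le a ({b} : Set P)
  simpa using h

private lemma ncard3_ne {x y z : P} (h : ({x, y, z} : Set P).ncard = 3) :
    x ≠ y ∧ x ≠ z ∧ y ≠ z := by
  refine ⟨?_, ?_, ?_⟩ <;> rintro rfl
  · rw [Set.insert_idem] at h
    have := ncard_pair_le x z
    omega
  · rw [show ({x, y, x} : Set P) = {x, y} from by ext t; simp; try tauto] at h
    have := ncard_pair_le x y
    omega
  · rw [show ({x, y, y} : Set P) = {x, y} from by ext t; simp; try tauto] at h
    have := ncard_pair_le x y
    omega

private lemma sum3 {A M : Type*} [DecidableEq A] [AddCommMonoid M] (f : A → M) {p q r : A}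
    (h1 : p ≠ q) (h2 : p ≠ r) (h3 : q ≠ r) :
    ∑ a ∈ ({p, q, r} : Finset A), f a = f p + f q + f r := by
  rw [Finset.sum_insert (by simp [h1, h2]), Finset.sum_insert (by simp [h3]),
    Finset.sum_singleton, ← add_assoc]

private lemma reindex [DecidableEq P] [DecidableEq G] {x y z x' y' z' : P} {α β γ : G}
    (hxy : x ≠ y) (hxz : x ≠ z) (hyz : y ≠ z)
    (hxy' : x' ≠ y') (hxz' : x' ≠ z') (hyz' : y' ≠ z')
    (hs : ({x, y, z} : Set P) = {x', y', z'}) :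
    ∃ a b c : G, ({(x, α), (y, β), (z, γ)} : Set (P × G)) = {(x', a), (y', b), (z', c)} ∧
      a + b + c = α + β + γ := by
  have hmem : ∀ p : P, p ∈ ({x, y, z} : Set P) →
      ∃ a : G, (p, a) ∈ ({(x, α), (y, β), (z, γ)} : Set (P × G)) := by
    intro p hp
    simp only [Set.mem_insert_iff, Set.mem_singleton_iff] at hp
    rcases hp with rfl | rfl | rfl
    exacts [⟨α, by simp⟩, ⟨β, by simp⟩, ⟨γ, by simp⟩]
  obtain ⟨a, ha⟩ := hmem x' (by rw [hs]; simp)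
  obtain ⟨b, hb⟩ := hmem y' (by rw [hs]; simp)
  obtain ⟨c, hc⟩ := hmem z' (by rw [hs]; simp)
  have heq : ({(x, α), (y, β), (z, γ)} : Set (P × G)) = {(x', a), (y', b), (z', c)} := by
    apply Set.Subset.antisymm
    · rintro ⟨p, v⟩ hp
      have hp' : p ∈ ({x', y', z'} : Set P) := by
        rw [← hs]
        rcases mem3.1 hp with ⟨rfl, _⟩ | ⟨rfl, _⟩ | ⟨rfl, _⟩ <;> simp
      simp only [Set.mem_insert_iff, Set.mem_singleton_iff] at hp'
      rcases hp' with rfl | rfl | rfl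
      · have hv : v = a := fun3 hxy hxz hyz hp ha
        simp [hv]
      · have hv : v = b := fun3 hxy hxz hyz hp hb
        simp [hv]
      · have hv : v = c := fun3 hxy hxz hyz hp hc
        simp [hv]
    · rintro ⟨p, v⟩ hp
      rcases mem3.1 hp with ⟨rfl, rfl⟩ | ⟨rfl, rfl⟩ | ⟨rfl, rfl⟩
      exacts [ha, hb, hc]
  refine ⟨a, b, c, heq, ?_⟩
  have hfin : ({(x, α), (y, β), (z, γ)} : Finset (P × G)) = {(x', a), (y', b), (z', c)} := by
    apply Finset.coe_injective
    simpa using heq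
  have h1 := sum3 (Prod.snd : P × G → G) (pne hxy α β) (pne hxz α γ) (pne hyz β γ)
  have h2 := sum3 (Prod.snd : P × G → G) (pne hxy' a b) (pne hxz' a c) (pne hyz' b c)
  rw [hfin] at h1
  exact h2.symm.trans h1

end aux
private lemma conv_struct {P G : Type*} [AddCommGroup G] {L : Set (Set P)}
    (hL3 : ∀ l ∈ L, l.ncard = 3) {ε : G} {w : Set (P × G)}
    (hw : w ∈ convLines ε L) :
    ∃ x y z : P, ∃ α β γ : G, x ≠ y ∧ x ≠ z ∧ y ≠ z ∧ ({x, y, z} : Set P) ∈ L ∧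
      α + β + γ = ε ∧ w = {(x, α), (y, β), (z, γ)} := by
  obtain ⟨x, y, z, α, β, γ, hl, hsum, rfl⟩ := hw
  obtain ⟨h1, h2, h3⟩ := ncard3_ne (hL3 _ hl)
  exact ⟨x, y, z, α, β, γ, h1, h2, h3, hl, hsum, rfl⟩

/-- If `M` is a PSTS which is a `(ν,r,b,3)`-configuration, `G` a finite abelian group
of order `q` and `ε ∈ G`, then the convolution `M ⋈_ε G` is a `(qν, qr, q²b, 3)`-%
configuration and is itself a partial Steiner triple system. -/
theorem conv_isConfiguration {P G : Type*} [Finite P] [AddCommGroup G] [Finite G]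
    (L : Set (Set P)) (ν r b q : ℕ) (ε : G)
    (hM : IsPSTS L) (hconf : IsConfiguration L ν r b) (hq : Nat.card G = q) :
    IsConfiguration (convLines ε L) (q * ν) (q * r) (q ^ 2 * b) ∧
    IsPSTS (convLines ε L) := by
  classical
  obtain ⟨hL3, huniq⟩ := hM
  obtain ⟨hν, hr, hb, -⟩ := hconf
  -- every convolution line has exactly 3 points
  have hline3 : ∀ w ∈ convLines ε L, w.ncard = 3 := by
    intro w hw
    obtain ⟨x, y, z, α, β, γ, h1, h2, h3, -, -, rfl⟩ := conv_struct hL3 hw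
    exact Set.ncard_eq_three.2 ⟨_, _, _, pne h1 α β, pne h2 α γ, pne h3 β γ, rfl⟩
  -- the convolution is a PSTS
  have hpsts : IsPSTS (convLines ε L) := by
    refine ⟨hline3, ?_⟩
    rintro w₁ hw₁ w₂ hw₂ ⟨p₁, a₁⟩ ⟨p₂, a₂⟩ hne h11 h21 h12 h22
    obtain ⟨x, y, z, α, β, γ, d1, d2, d3, hl1, hs1, rfl⟩ := conv_struct hL3 hw₁
    obtain ⟨x', y', z', α', β', γ', e1, e2, e3, hl2, hs2, rfl⟩ := conv_struct hL3 hw₂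
    have hp : p₁ ≠ p₂ := by
      rintro rfl
      exact hne (by rw [fun3 d1 d2 d3 h11 h21])
    have hp1l1 : p₁ ∈ ({x, y, z} : Set P) := by
      rcases mem3.1 h11 with ⟨rfl, -⟩ | ⟨rfl, -⟩ | ⟨rfl, -⟩ <;> simp
    have hp2l1 : p₂ ∈ ({x, y, z} : Set P) := by
      rcases mem3.1 h21 with ⟨rfl, -⟩ | ⟨rfl, -⟩ | ⟨rfl, -⟩ <;> simp
    have hp1l2 : p₁ ∈ ({x', y', z'} : Set P) := by
      rcases mem3.1 h12 with ⟨rfl, -⟩ | ⟨rfl, -⟩ | ⟨rfl, -⟩ <;> simp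
    have hp2l2 : p₂ ∈ ({x', y', z'} : Set P) := by
      rcases mem3.1 h22 with ⟨rfl, -⟩ | ⟨rfl, -⟩ | ⟨rfl, -⟩ <;> simp
    have hll : ({x, y, z} : Set P) = {x', y', z'} :=
      huniq _ hl1 _ hl2 p₁ p₂ hp hp1l1 hp2l1 hp1l2 hp2l2
    -- find the third point of the common base line
    obtain ⟨t, htl, htp⟩ : ∃ t ∈ ({x, y, z} : Set P), t ∉ ({p₁, p₂} : Set P) := by
      by_contra hcon
      push_neg at hcon
      have hle := Set.ncard_le_ncard hcon (Set.toFinite _)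
      rw [hL3 _ hl1] at hle
      have := ncard_pair_le p₁ p₂
      omega
    have ht1 : p₁ ≠ t := by rintro rfl; exact htp (by simp)
    have ht2 : p₂ ≠ t := by rintro rfl; exact htp (by simp)
    have hteq : ({x, y, z} : Set P) = {p₁, p₂, t} := by
      symm
      apply Set.eq_of_subset_of_ncard_le
      · intro u hu
        simp only [Set.mem_insert_iff, Set.mem_singleton_iff] at hu
        rcases hu with rfl | rfl | rfl
        exacts [hp1l1, hp2l1, htl]
      · rw [hL3 _ hl1, Set.ncard_eq_three.2 ⟨p₁, p₂, t, hp, ht1, ht2, rfl⟩]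
      · exact Set.toFinite _
    obtain ⟨a, bb, c, hw1eq, hsum1⟩ := reindex (α := α) (β := β) (γ := γ)
      d1 d2 d3 hp ht1 ht2 hteq
    obtain ⟨a', bb', c', hw2eq, hsum2⟩ := reindex (α := α') (β := β') (γ := γ')
      e1 e2 e3 hp ht1 ht2 (hll.symm.trans hteq)
    rw [hw1eq] at h11 h21 ⊢
    rw [hw2eq] at h12 h22 ⊢
    have ha1 : a₁ = a := val_x hp ht1 h11
    have hb1 : a₂ = bb := val_y hp ht2 h21
    have ha2 : a₁ = a' := val_x hp ht1 h12
    have hb2 : a₂ = bb' := val_y hp ht2 h22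
    have haa : a = a' := ha1 ▸ ha2
    have hbb : bb = bb' := hb1 ▸ hb2
    have hcc : c = c' := by
      have h := (hsum1.trans hs1).trans ((hsum2.trans hs2).symm)
      rw [haa, hbb] at h
      exact add_left_cancel h
    rw [haa, hbb, hcc]
  -- choose an ordered representative for every line of L
  choose xr yr zr hd1 hd2 hd3 hrep using
    fun l : ↥L => Set.ncard_eq_three.1 (hL3 l.1 l.2)
  -- number of lines
  have hcount : (convLines ε L).ncard = q ^ 2 * b := by
    have himg : convLines ε L =
        (fun t : ↥L × G × G =>
          ({(xr t.1, t.2.1), (yr t.1, t.2.2), (zr t.1, ε - t.2.1 - t.2.2)} : Set (P × G))) ''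
          Set.univ := by
      ext w
      constructor
      · intro hw
        obtain ⟨x, y, z, α, β, γ, d1, d2, d3, hl, hsum, rfl⟩ := conv_struct hL3 hw
        obtain ⟨a, bb, c, heq, hsum'⟩ := reindex (α := α) (β := β) (γ := γ) d1 d2 d3
          (hd1 ⟨_, hl⟩) (hd2 ⟨_, hl⟩) (hd3 ⟨_, hl⟩) (hrep ⟨_, hl⟩)
        refine ⟨(⟨{x, y, z}, hl⟩, a, bb), Set.mem_univ _, ?_⟩
        have hc : c = ε - a - bb := by
          have h := hsum'.trans hsum
          rw [← h]; abel
        dsimp only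
        rw [heq, hc]
      · rintro ⟨⟨ls, a, bb⟩, -, rfl⟩
        exact ⟨xr ls, yr ls, zr ls, a, bb, ε - a - bb,
          by rw [← hrep ls]; exact ls.2, by abel, rfl⟩
    have hinj : Set.InjOn
        (fun t : ↥L × G × G =>
          ({(xr t.1, t.2.1), (yr t.1, t.2.2), (zr t.1, ε - t.2.1 - t.2.2)} : Set (P × G)))
        Set.univ := by
      rintro ⟨l₁, a₁, b₁⟩ - ⟨l₂, a₂, b₂⟩ - hFe
      dsimp only at hFe
      have hbase : l₁ = l₂ := by
        have h1 : Prod.fst '' ({(xr l₁, a₁), (yr l₁, b₁), (zr l₁, ε - a₁ - b₁)} : Set (P × G)) =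
            l₁.1 := by rw [fst_image, ← hrep l₁]
        have h2 : Prod.fst '' ({(xr l₂, a₂), (yr l₂, b₂), (zr l₂, ε - a₂ - b₂)} : Set (P × G)) =
            l₂.1 := by rw [fst_image, ← hrep l₂]
        apply Subtype.ext
        rw [← h1, ← h2, hFe]
      subst hbase
      have mem1 : ((xr l₁ : P), a₁) ∈
          ({(xr l₁, a₂), (yr l₁, b₂), (zr l₁, ε - a₂ - b₂)} : Set (P × G)) := by
        rw [← hFe]; simp
      have mem2 : ((yr l₁ : P), b₁) ∈
          ({(xr l₁, a₂), (yr l₁, b₂), (zr l₁, ε - a₂ - b₂)} : Set (P × G)) := by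
        rw [← hFe]; simp
      have hA : a₁ = a₂ := val_x (hd1 l₁) (hd2 l₁) mem1
      have hB : b₁ = b₂ := val_y (hd1 l₁) (hd3 l₁) mem2
      simp [Prod.ext_iff, hA, hB]
    rw [himg, Set.ncard_image_of_injOn hinj, Set.ncard_univ, Nat.card_prod, Nat.card_prod,
      Nat.card_coe_set_eq, hb, hq]
    ring
  -- degree of every point
  have hdeg : ∀ p : P × G, {w ∈ convLines ε L | p ∈ w}.ncard = q * r := by
    rintro ⟨p₀, α₀⟩
    have hsplit : ∀ l : ↥{l : Set P | l ∈ L ∧ p₀ ∈ l},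
        ∃ u v : P, p₀ ≠ u ∧ p₀ ≠ v ∧ u ≠ v ∧ l.1 = {p₀, u, v} := by
      rintro ⟨l, hl, hpl⟩
      have hrl : l = {xr ⟨l, hl⟩, yr ⟨l, hl⟩, zr ⟨l, hl⟩} := hrep ⟨l, hl⟩
      show ∃ u v : P, p₀ ≠ u ∧ p₀ ≠ v ∧ u ≠ v ∧ l = {p₀, u, v}
      rw [hrl] at hpl
      simp only [Set.mem_insert_iff, Set.mem_singleton_iff] at hpl
      rcases hpl with h | h | h
      · exact ⟨yr ⟨l, hl⟩, zr ⟨l, hl⟩, h ▸ hd1 ⟨l, hl⟩, h ▸ hd2 ⟨l, hl⟩, hd3 ⟨l, hl⟩,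
          by rw [h]; exact hrl⟩
      · refine ⟨xr ⟨l, hl⟩, zr ⟨l, hl⟩, h ▸ (hd1 ⟨l, hl⟩).symm, h ▸ hd3 ⟨l, hl⟩, hd2 ⟨l, hl⟩, ?_⟩
        rw [h]; exact hrl.trans (by ext u; simp; try tauto)
      · refine ⟨xr ⟨l, hl⟩, yr ⟨l, hl⟩, h ▸ (hd2 ⟨l, hl⟩).symm, h ▸ (hd3 ⟨l, hl⟩).symm,
          hd1 ⟨l, hl⟩, ?_⟩
        rw [h]; exact hrl.trans (by ext u; simp; try tauto)
    choose ur vr hu hv huv hrep' using hsplit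
    have himg : {w ∈ convLines ε L | (p₀, α₀) ∈ w} =
        (fun t : ↥{l : Set P | l ∈ L ∧ p₀ ∈ l} × G =>
          ({(p₀, α₀), (ur t.1, t.2), (vr t.1, ε - α₀ - t.2)} : Set (P × G))) ''
          Set.univ := by
      ext w
      constructor
      · rintro ⟨hw, hpw⟩
        obtain ⟨x, y, z, α, β, γ, d1, d2, d3, hl, hsum, rfl⟩ := conv_struct hL3 hw
        have hpl : p₀ ∈ ({x, y, z} : Set P) := by
          rcases mem3.1 hpw with ⟨rfl, -⟩ | ⟨rfl, -⟩ | ⟨rfl, -⟩ <;> simp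
        obtain ⟨a, bb, c, heq, hsum'⟩ := reindex (α := α) (β := β) (γ := γ) d1 d2 d3
          (hu ⟨_, hl, hpl⟩) (hv ⟨_, hl, hpl⟩) (huv ⟨_, hl, hpl⟩) (hrep' ⟨_, hl, hpl⟩)
        have ha : a = α₀ := by
          rw [heq] at hpw
          exact (val_x (hu ⟨_, hl, hpl⟩) (hv ⟨_, hl, hpl⟩) hpw).symm
        refine ⟨(⟨{x, y, z}, hl, hpl⟩, bb), Set.mem_univ _, ?_⟩
        have hc : c = ε - α₀ - bb := by
          have h := hsum'.trans hsum
          rw [ha] at h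
          rw [← h]; abel
        dsimp only
        rw [heq, ha, hc]
      · rintro ⟨⟨ls, bb⟩, -, rfl⟩
        refine ⟨⟨p₀, ur ls, vr ls, α₀, bb, ε - α₀ - bb, ?_, by abel, rfl⟩, by simp⟩
        rw [← hrep' ls]; exact ls.2.1
    have hinj : Set.InjOn
        (fun t : ↥{l : Set P | l ∈ L ∧ p₀ ∈ l} × G =>
          ({(p₀, α₀), (ur t.1, t.2), (vr t.1, ε - α₀ - t.2)} : Set (P × G)))
        Set.univ := by
      rintro ⟨l₁, b₁⟩ - ⟨l₂, b₂⟩ - hFe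
      dsimp only at hFe
      have hbase : l₁ = l₂ := by
        have h1 : Prod.fst '' ({(p₀, α₀), (ur l₁, b₁), (vr l₁, ε - α₀ - b₁)} : Set (P × G)) =
            l₁.1 := by rw [fst_image, ← hrep' l₁]
        have h2 : Prod.fst '' ({(p₀, α₀), (ur l₂, b₂), (vr l₂, ε - α₀ - b₂)} : Set (P × G)) =
            l₂.1 := by rw [fst_image, ← hrep' l₂]
        apply Subtype.ext
        rw [← h1, ← h2, hFe]
      subst hbase
      have mem2 : ((ur l₁ : P), b₁) ∈
          ({(p₀, α₀), (ur l₁, b₂), (vr l₁, ε - α₀ - b₂)} : Set (P × G)) := by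
        rw [← hFe]; simp
      have hB : b₁ = b₂ := val_y (hu l₁) (huv l₁) mem2
      simp [Prod.ext_iff, hB]
    rw [himg, Set.ncard_image_of_injOn hinj, Set.ncard_univ, Nat.card_prod,
      Nat.card_coe_set_eq, hr p₀, hq]
    ring
  refine ⟨⟨?_, hdeg, hcount, hline3⟩, hpsts⟩
  rw [Nat.card_prod, hν, hq]
  ring
end

section
/- For every partial Steiner triple system M, the configuration 3-weaved from M is isomorphic to the convolution of M with the cyclic group C_3 = ℤ/3ℤ at parameter 1, and also to the convolution at parameter 2: Π(3,M) ≅ M⋈_1 C_3 ≅ M⋈_2 C_3. -/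
/-- `f` is an isomorphism of the incidence structure with line set `L₁` onto the one
with line set `L₂`: it maps lines onto lines and its inverse maps lines onto lines. -/
def IsIso {P Q : Type*} (L₁ : Set (Set P)) (L₂ : Set (Set Q)) (f : P ≃ Q) : Prop :=
  (∀ l ∈ L₁, f '' l ∈ L₂) ∧ (∀ l ∈ L₂, f.symm '' l ∈ L₁)

lemma zmod3_fwd : ∀ i j k : ZMod 3,
    ((i = j ∧ i = k - 1) ∨ (i = k ∧ i = j - 1) ∨ (j = k ∧ j = i - 1)) →
    i + j + k = 1 := by decide

lemma zmod3_bwd : ∀ i j k : ZMod 3, i + j + k = 1 →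
    ((i = j ∧ i = k - 1) ∨ (i = k ∧ i = j - 1) ∨ (j = k ∧ j = i - 1)) := by decide

lemma weave3_eq_conv1 {P : Type*} (L : Set (Set P)) :
    weaveLines 3 L = convLines (1 : ZMod 3) L := by
  ext w
  constructor
  · rintro ⟨a, b, c, i, j, k, hL, hc, rfl⟩
    exact ⟨a, b, c, i, j, k, hL, zmod3_fwd i j k hc, rfl⟩
  · rintro ⟨a, b, c, i, j, k, hL, hs, rfl⟩
    exact ⟨a, b, c, i, j, k, hL, zmod3_bwd i j k hs, rfl⟩

/-- For every PSTS `M`, `Π(3,M) ≅ M ⋈₁ C₃` and `Π(3,M) ≅ M ⋈₂ C₃`. -/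
theorem weave3_iso_conv {P : Type*} (L : Set (Set P)) (hM : IsPSTS L) :
    (∃ f : P × ZMod 3 ≃ P × ZMod 3,
      IsIso (weaveLines 3 L) (convLines (1 : ZMod 3) L) f) ∧
    (∃ f : P × ZMod 3 ≃ P × ZMod 3,
      IsIso (weaveLines 3 L) (convLines (2 : ZMod 3) L) f) := by
  rw [weave3_eq_conv1 L]
  constructor
  · exact ⟨Equiv.refl _, fun l hl => by simpa using hl, fun l hl => by simpa using hl⟩
  · refine ⟨(Equiv.refl P).prodCongr (Equiv.neg (ZMod 3)), ?_, ?_⟩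
    · rintro l ⟨a, b, c, i, j, k, hL, hs, rfl⟩
      refine ⟨a, b, c, -i, -j, -k, hL, ?_, ?_⟩
      · have : -(i + j + k) = -1 := by rw [hs]
        rw [show (2 : ZMod 3) = -1 by decide]; linear_combination this
      · simp [Set.image_insert_eq, Equiv.prodCongr, Equiv.neg]
    · rintro l ⟨a, b, c, i, j, k, hL, hs, rfl⟩
      refine ⟨a, b, c, -i, -j, -k, hL, ?_, ?_⟩
      · have : -(i + j + k) = -2 := by rw [hs]
        rw [show (1 : ZMod 3) = -2 by decide]; linear_combination this
      · simp [Set.image_insert_eq, Equiv.prodCongr, Equiv.neg]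
end

section
/- Let m ≥ 3 be an integer, G an abelian group, ε ∈ G, and M a partial Steiner triple system. Then weaving commutes with convolution: Π(m, M⋈_ε G) is isomorphic to (Π(m,M))⋈_ε G. -/
set_option maxHeartbeats 1000000 in
private lemma perm3 {T : Type*} {p q r u v w : T} (huv : u ≠ v) (huw : u ≠ w) (hvw : v ≠ w)
    (h : ({p, q, r} : Set T) = {u, v, w}) :
    (p = u ∧ q = v ∧ r = w) ∨ (p = u ∧ q = w ∧ r = v) ∨ (p = v ∧ q = u ∧ r = w) ∨
    (p = v ∧ q = w ∧ r = u) ∨ (p = w ∧ q = u ∧ r = v) ∨ (p = w ∧ q = v ∧ r = u) := by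
  have hp : p ∈ ({u, v, w} : Set T) := by rw [← h]; simp
  have hq : q ∈ ({u, v, w} : Set T) := by rw [← h]; simp
  have hr : r ∈ ({u, v, w} : Set T) := by rw [← h]; simp
  have hu : u ∈ ({p, q, r} : Set T) := by rw [h]; simp
  have hv : v ∈ ({p, q, r} : Set T) := by rw [h]; simp
  have hw : w ∈ ({p, q, r} : Set T) := by rw [h]; simp
  clear h
  simp only [Set.mem_insert_iff, Set.mem_singleton_iff] at hp hq hr hu hv hw
  rcases hp with rfl | rfl | rfl <;> rcases hq with rfl | rfl | rfl <;>
    rcases hr with rfl | rfl | rfl <;> simp_all <;>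
    (first | (rcases hw with h4 | h4 | h4) | (rcases hw with h4 | h4) | skip) <;> simp_all

private lemma ncard3_ne_s3 {T : Type*} {a b c : T} (h : ({a, b, c} : Set T).ncard = 3) :
    a ≠ b ∧ a ≠ c ∧ b ≠ c := by
  refine ⟨?_, ?_, ?_⟩ <;> rintro rfl
  · have e : ({a, a, c} : Set T) = {a, c} := by ext t; simp
    rw [e] at h
    have := Set.ncard_insert_le a ({c} : Set T)
    simp at this; omega
  · have e : ({a, b, a} : Set T) = {a, b} := by ext t; simp; tauto
    rw [e] at h
    have := Set.ncard_insert_le a ({b} : Set T)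
    simp at this; omega
  · have e : ({a, b, b} : Set T) = {a, b} := by ext t; simp
    rw [e] at h
    have := Set.ncard_insert_le a ({b} : Set T)
    simp at this; omega

private lemma wc_swap12 {m : ℕ} {i j k : ZMod m}
    (h : (i = j ∧ i = k - 1) ∨ (i = k ∧ i = j - 1) ∨ (j = k ∧ j = i - 1)) :
    (j = i ∧ j = k - 1) ∨ (j = k ∧ j = i - 1) ∨ (i = k ∧ i = j - 1) := by
  rcases h with ⟨rfl, h2⟩ | h | h
  exacts [Or.inl ⟨rfl, h2⟩, Or.inr (Or.inr h), Or.inr (Or.inl h)]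

private lemma wc_swap23 {m : ℕ} {i j k : ZMod m}
    (h : (i = j ∧ i = k - 1) ∨ (i = k ∧ i = j - 1) ∨ (j = k ∧ j = i - 1)) :
    (i = k ∧ i = j - 1) ∨ (i = j ∧ i = k - 1) ∨ (k = j ∧ k = i - 1) := by
  rcases h with h | h | ⟨rfl, h2⟩
  exacts [Or.inr (Or.inl h), Or.inl h, Or.inr (Or.inr ⟨rfl, h2⟩)]

/-- Weaving commutes with convolution: `Π(m, M ⋈_ε G) ≅ (Π(m,M)) ⋈_ε G`. -/
theorem weave_conv_comm {P G : Type*} [AddCommGroup G] (L : Set (Set P))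
    (m : ℕ) (hm : 3 ≤ m) (ε : G) (hM : IsPSTS L) :
    ∃ f : (P × G) × ZMod m ≃ (P × ZMod m) × G,
      IsIso (weaveLines m (convLines ε L)) (convLines ε (weaveLines m L)) f := by
  refine ⟨⟨fun x => ((x.1.1, x.2), x.1.2), fun y => ((y.1.1, y.2), y.1.2),
    fun x => rfl, fun y => rfl⟩, ?_, ?_⟩
  · rintro l ⟨⟨X1, X2⟩, ⟨Y1, Y2⟩, ⟨Z1, Z2⟩, i, j, k, hXYZ, hwc, rfl⟩
    obtain ⟨x, y, z, α, β, γ, hL, hsum, heq⟩ := hXYZ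
    obtain ⟨hxy, hxz, hyz⟩ := ncard3_ne_s3 (hM.1 _ hL)
    have hd1 : ((x, α) : P × G) ≠ (y, β) := fun h => hxy (congrArg Prod.fst h)
    have hd2 : ((x, α) : P × G) ≠ (z, γ) := fun h => hxz (congrArg Prod.fst h)
    have hd3 : ((y, β) : P × G) ≠ (z, γ) := fun h => hyz (congrArg Prod.fst h)
    have hperm := perm3 hd1 hd2 hd3 heq
    refine ⟨(X1, i), (Y1, j), (Z1, k), X2, Y2, Z2,
      ⟨X1, Y1, Z1, i, j, k, ?_, hwc, rfl⟩, ?_, ?_⟩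
    · have e2 : (Prod.fst '' ({(X1, X2), (Y1, Y2), (Z1, Z2)} : Set (P × G)) : Set P)
          = {X1, Y1, Z1} := by simp [Set.image_insert_eq]
      rw [← e2, heq]
      simpa [Set.image_insert_eq] using hL
    · rcases hperm with ⟨⟨rfl,rfl⟩,⟨rfl,rfl⟩,⟨rfl,rfl⟩⟩ | ⟨⟨rfl,rfl⟩,⟨rfl,rfl⟩,⟨rfl,rfl⟩⟩ |
        ⟨⟨rfl,rfl⟩,⟨rfl,rfl⟩,⟨rfl,rfl⟩⟩ | ⟨⟨rfl,rfl⟩,⟨rfl,rfl⟩,⟨rfl,rfl⟩⟩ |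
        ⟨⟨rfl,rfl⟩,⟨rfl,rfl⟩,⟨rfl,rfl⟩⟩ | ⟨⟨rfl,rfl⟩,⟨rfl,rfl⟩,⟨rfl,rfl⟩⟩ <;>
      · rw [← hsum]; try abel
    · simp [Set.image_insert_eq]
  · rintro l ⟨⟨x1, x2⟩, ⟨y1, y2⟩, ⟨z1, z2⟩, α, β, γ, hXYZ, hsum, rfl⟩
    obtain ⟨a, b, c, i, j, k, hL, hwc, heq⟩ := hXYZ
    obtain ⟨hab, hac, hbc⟩ := ncard3_ne_s3 (hM.1 _ hL)
    have hd1 : ((a, i) : P × ZMod m) ≠ (b, j) := fun h => hab (congrArg Prod.fst h)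
    have hd2 : ((a, i) : P × ZMod m) ≠ (c, k) := fun h => hac (congrArg Prod.fst h)
    have hd3 : ((b, j) : P × ZMod m) ≠ (c, k) := fun h => hbc (congrArg Prod.fst h)
    have hperm := perm3 hd1 hd2 hd3 heq
    refine ⟨(x1, α), (y1, β), (z1, γ), x2, y2, z2,
      ⟨x1, y1, z1, α, β, γ, ?_, hsum, rfl⟩, ?_, ?_⟩
    · have e2 : (Prod.fst '' ({(x1, x2), (y1, y2), (z1, z2)} : Set (P × ZMod m)) : Set P)
          = {x1, y1, z1} := by simp [Set.image_insert_eq]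
      rw [← e2, heq]
      simpa [Set.image_insert_eq] using hL
    · rcases hperm with ⟨⟨rfl,rfl⟩,⟨rfl,rfl⟩,⟨rfl,rfl⟩⟩ | ⟨⟨rfl,rfl⟩,⟨rfl,rfl⟩,⟨rfl,rfl⟩⟩ |
        ⟨⟨rfl,rfl⟩,⟨rfl,rfl⟩,⟨rfl,rfl⟩⟩ | ⟨⟨rfl,rfl⟩,⟨rfl,rfl⟩,⟨rfl,rfl⟩⟩ |
        ⟨⟨rfl,rfl⟩,⟨rfl,rfl⟩,⟨rfl,rfl⟩⟩ | ⟨⟨rfl,rfl⟩,⟨rfl,rfl⟩,⟨rfl,rfl⟩⟩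
      exacts [hwc, wc_swap23 hwc, wc_swap12 hwc, wc_swap23 (wc_swap12 hwc),
        wc_swap12 (wc_swap23 hwc), wc_swap12 (wc_swap23 (wc_swap12 hwc))]
    · simp [Set.image_insert_eq]
end

section
/- Let m, n ≥ 3 be integers and M a partial Steiner triple system. Then the two iterated weaved configurations commute up to isomorphism: Π(m, Π(n,M)) ≅ Π(n, Π(m,M)). -/
lemma wcond_perm {m : ℕ} {i j k : ZMod m}
    (h : (i = j ∧ i = k - 1) ∨ (i = k ∧ i = j - 1) ∨ (j = k ∧ j = i - 1)) :
    ((i = k ∧ i = j - 1) ∨ (i = j ∧ i = k - 1) ∨ (k = j ∧ k = i - 1)) ∧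
    ((j = i ∧ j = k - 1) ∨ (j = k ∧ j = i - 1) ∨ (i = k ∧ i = j - 1)) ∧
    ((j = k ∧ j = i - 1) ∨ (j = i ∧ j = k - 1) ∨ (k = i ∧ k = j - 1)) ∧
    ((k = i ∧ k = j - 1) ∨ (k = j ∧ k = i - 1) ∨ (i = j ∧ i = k - 1)) ∧
    ((k = j ∧ k = i - 1) ∨ (k = i ∧ k = j - 1) ∨ (j = i ∧ j = k - 1)) := by
  obtain ⟨rfl, rfl⟩ | ⟨rfl, rfl⟩ | ⟨rfl, rfl⟩ := h <;> refine ⟨?_, ?_, ?_, ?_, ?_⟩ <;> tauto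

lemma pair_ncard_le {α : Type*} (a c : α) : ({a, c} : Set α).ncard ≤ 2 := by
  have h1 := Set.ncard_insert_le a ({c} : Set α)
  simpa using h1

lemma distinct_of_ncard3 {α : Type*} {a b c : α} (h : ({a, b, c} : Set α).ncard = 3) :
    a ≠ b ∧ a ≠ c ∧ b ≠ c := by
  refine ⟨?_, ?_, ?_⟩ <;> rintro rfl
  · have he : ({a, a, c} : Set α) = {a, c} := by ext x; simp
    rw [he] at h; have := pair_ncard_le a c; omega
  · have he : ({a, b, a} : Set α) = {a, b} := by ext x; simp; tauto
    rw [he] at h; have := pair_ncard_le a b; omega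
  · have he : ({a, b, b} : Set α) = {a, b} := by ext x; simp
    rw [he] at h; have := pair_ncard_le a b; omega

lemma triple_eq {α : Type*} {A B C x y z : α} (hxy : x ≠ y) (hxz : x ≠ z) (hyz : y ≠ z)
    (h : ({A, B, C} : Set α) = {x, y, z}) :
    (A = x ∧ B = y ∧ C = z) ∨ (A = x ∧ B = z ∧ C = y) ∨ (A = y ∧ B = x ∧ C = z) ∨
    (A = y ∧ B = z ∧ C = x) ∨ (A = z ∧ B = x ∧ C = y) ∨ (A = z ∧ B = y ∧ C = x) := by
  have hA : A = x ∨ A = y ∨ A = z := by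
    have : A ∈ ({x,y,z} : Set α) := h ▸ (by simp); simpa using this
  have hB : B = x ∨ B = y ∨ B = z := by
    have : B ∈ ({x,y,z} : Set α) := h ▸ (by simp); simpa using this
  have hC : C = x ∨ C = y ∨ C = z := by
    have : C ∈ ({x,y,z} : Set α) := h ▸ (by simp); simpa using this
  have hx : x = A ∨ x = B ∨ x = C := by
    have : x ∈ ({A,B,C} : Set α) := h.symm ▸ (by simp); simpa using this
  have hy : y = A ∨ y = B ∨ y = C := by
    have : y ∈ ({A,B,C} : Set α) := h.symm ▸ (by simp); simpa using this
  have hz : z = A ∨ z = B ∨ z = C := by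
    have : z ∈ ({A,B,C} : Set α) := h.symm ▸ (by simp); simpa using this
  rcases hA with rfl | rfl | rfl <;> rcases hB with rfl | rfl | rfl <;>
    rcases hC with rfl | rfl | rfl <;> simp_all <;> tauto

def swapE (P : Type*) (m n : ℕ) : (P × ZMod n) × ZMod m ≃ (P × ZMod m) × ZMod n where
  toFun x := ((x.1.1, x.2), x.1.2)
  invFun x := ((x.1.1, x.2), x.1.2)
  left_inv _ := rfl
  right_inv _ := rfl


lemma tcomm {α : Type*} (a b c : α) :
    ({a, c, b} : Set α) = {a, b, c} ∧ ({b, a, c} : Set α) = {a, b, c} ∧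
    ({b, c, a} : Set α) = {a, b, c} ∧ ({c, a, b} : Set α) = {a, b, c} ∧
    ({c, b, a} : Set α) = {a, b, c} := by
  refine ⟨?_, ?_, ?_, ?_, ?_⟩ <;> ext x <;> simp <;> tauto

set_option maxHeartbeats 1600000 in
lemma weave_forward {P : Type*} (L : Set (Set P)) (m n : ℕ) (hM : IsPSTS L) :
    ∀ w ∈ weaveLines m (weaveLines n L),
      (swapE P m n) '' w ∈ weaveLines n (weaveLines m L) := by
  rintro w ⟨A, B, C, r, s, t, hABC, hrst, rfl⟩
  obtain ⟨a, b, c, i, j, k, habc, hijk, hset⟩ := hABC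
  obtain ⟨hab, hac, hbc⟩ := distinct_of_ncard3 (hM.1 _ habc)
  have hxy : ((a, i) : P × ZMod n) ≠ (b, j) := fun h => hab (congrArg Prod.fst h)
  have hxz : ((a, i) : P × ZMod n) ≠ (c, k) := fun h => hac (congrArg Prod.fst h)
  have hyz : ((b, j) : P × ZMod n) ≠ (c, k) := fun h => hbc (congrArg Prod.fst h)
  obtain ⟨h1, h2, h3, h4, h5⟩ := wcond_perm hijk
  rcases triple_eq hxy hxz hyz hset with
      ⟨hA, hB, hC⟩ | ⟨hA, hB, hC⟩ | ⟨hA, hB, hC⟩ | ⟨hA, hB, hC⟩ | ⟨hA, hB, hC⟩ | ⟨hA, hB, hC⟩ <;>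
    subst hA <;> subst hB <;> subst hC
  · have himg : (swapE P m n) '' {((a,i), r), ((b,j), s), ((c,k), t)} =
        {((a,r), i), ((b,s), j), ((c,t), k)} := by
      simp [Set.image_insert_eq, swapE]
    rw [himg]
    have hline : ({(a,r), (b,s), (c,t)} : Set (P × ZMod m)) ∈ weaveLines m L := by
      refine ⟨a, b, c, r, s, t, ?_, hrst, rfl⟩
      exact habc
    exact ⟨(a,r), (b,s), (c,t), i, j, k, hline, hijk, rfl⟩
  · have himg : (swapE P m n) '' {((a,i), r), ((c,k), s), ((b,j), t)} =
        {((a,r), i), ((c,s), k), ((b,t), j)} := by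
      simp [Set.image_insert_eq, swapE]
    rw [himg]
    have hline : ({(a,r), (c,s), (b,t)} : Set (P × ZMod m)) ∈ weaveLines m L := by
      refine ⟨a, c, b, r, s, t, ?_, hrst, rfl⟩
      rwa [(tcomm a b c).1]
    exact ⟨(a,r), (c,s), (b,t), i, k, j, hline, h1, rfl⟩
  · have himg : (swapE P m n) '' {((b,j), r), ((a,i), s), ((c,k), t)} =
        {((b,r), j), ((a,s), i), ((c,t), k)} := by
      simp [Set.image_insert_eq, swapE]
    rw [himg]
    have hline : ({(b,r), (a,s), (c,t)} : Set (P × ZMod m)) ∈ weaveLines m L := by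
      refine ⟨b, a, c, r, s, t, ?_, hrst, rfl⟩
      rwa [(tcomm a b c).2.1]
    exact ⟨(b,r), (a,s), (c,t), j, i, k, hline, h2, rfl⟩
  · have himg : (swapE P m n) '' {((b,j), r), ((c,k), s), ((a,i), t)} =
        {((b,r), j), ((c,s), k), ((a,t), i)} := by
      simp [Set.image_insert_eq, swapE]
    rw [himg]
    have hline : ({(b,r), (c,s), (a,t)} : Set (P × ZMod m)) ∈ weaveLines m L := by
      refine ⟨b, c, a, r, s, t, ?_, hrst, rfl⟩
      rwa [(tcomm a b c).2.2.1]
    exact ⟨(b,r), (c,s), (a,t), j, k, i, hline, h3, rfl⟩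
  · have himg : (swapE P m n) '' {((c,k), r), ((a,i), s), ((b,j), t)} =
        {((c,r), k), ((a,s), i), ((b,t), j)} := by
      simp [Set.image_insert_eq, swapE]
    rw [himg]
    have hline : ({(c,r), (a,s), (b,t)} : Set (P × ZMod m)) ∈ weaveLines m L := by
      refine ⟨c, a, b, r, s, t, ?_, hrst, rfl⟩
      rwa [(tcomm a b c).2.2.2.1]
    exact ⟨(c,r), (a,s), (b,t), k, i, j, hline, h4, rfl⟩
  · have himg : (swapE P m n) '' {((c,k), r), ((b,j), s), ((a,i), t)} =
        {((c,r), k), ((b,s), j), ((a,t), i)} := by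
      simp [Set.image_insert_eq, swapE]
    rw [himg]
    have hline : ({(c,r), (b,s), (a,t)} : Set (P × ZMod m)) ∈ weaveLines m L := by
      refine ⟨c, b, a, r, s, t, ?_, hrst, rfl⟩
      rwa [(tcomm a b c).2.2.2.2]
    exact ⟨(c,r), (b,s), (a,t), k, j, i, hline, h5, rfl⟩

/-- Iterated weaving commutes up to isomorphism: `Π(m, Π(n,M)) ≅ Π(n, Π(m,M))`. -/
theorem weave_weave_comm {P : Type*} (L : Set (Set P)) (m n : ℕ)
    (hm : 3 ≤ m) (hn : 3 ≤ n) (hM : IsPSTS L) :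
    ∃ f : (P × ZMod n) × ZMod m ≃ (P × ZMod m) × ZMod n,
      IsIso (weaveLines m (weaveLines n L)) (weaveLines n (weaveLines m L)) f := by
  refine ⟨swapE P m n, weave_forward L m n hM, ?_⟩
  intro l hl
  have hc : ⇑(swapE P m n).symm = ⇑(swapE P n m) := rfl
  rw [hc]
  exact weave_forward L n m hM l hl
end

section
/- Let M be a partial Steiner triple system, m > 3 an integer, and F an automorphism of Π(m,M) such that F({a} × C_m) = {a} × C_m for each point a of M. Let L = {a,b,c} be a line of M and suppose F(a,i0) = (a,j0) for some i0, j0 ∈ C_m. Then F(x,i) = (x, i + (j0 − i0)) for every x ∈ {a,b,c} and every i ∈ C_m. -/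
/-- The bijection `f` is an automorphism of the incidence structure with line set `L`. -/
def IsAuto {P : Type*} (L : Set (Set P)) (f : P ≃ P) : Prop :=
  (∀ l ∈ L, f '' l ∈ L) ∧ (∀ l ∈ L, f.symm '' l ∈ L)


/-- Pattern of second coordinates of a weave line. -/
def Pat (m : ℕ) (x y z : ZMod m) : Prop :=
  (x = y ∧ x = z - 1) ∨ (x = z ∧ x = y - 1) ∨ (y = z ∧ y = x - 1)

lemma pat_swap12 {m : ℕ} {x y z : ZMod m} (h : Pat m x y z) : Pat m y x z := by
  rcases h with ⟨h1, h2⟩ | ⟨h1, h2⟩ | ⟨h1, h2⟩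
  · exact Or.inl ⟨h1.symm, h1 ▸ h2⟩
  · exact Or.inr (Or.inr ⟨h1, h2⟩)
  · exact Or.inr (Or.inl ⟨h1, h2⟩)

lemma zmod_ne (m : ℕ) (hm : 3 < m) :
    (1 : ZMod m) ≠ 0 ∧ (2 : ZMod m) ≠ 0 ∧ (3 : ZMod m) ≠ 0 := by
  haveI : NeZero m := ⟨by omega⟩
  refine ⟨?_, ?_, ?_⟩ <;> intro h
  · have h' : ((1 : ℕ) : ZMod m) = 0 := by push_cast; exact h
    have := ZMod.val_cast_of_lt (show 1 < m by omega)
    rw [h'] at this; simp at this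
  · have h' : ((2 : ℕ) : ZMod m) = 0 := by push_cast; exact h
    have := ZMod.val_cast_of_lt (show 2 < m by omega)
    rw [h'] at this; simp at this
  · have h' : ((3 : ℕ) : ZMod m) = 0 := by push_cast; exact h
    have := ZMod.val_cast_of_lt (show 3 < m by omega)
    rw [h'] at this; simp at this

lemma pat_swap23 {m : ℕ} {x y z : ZMod m} (h : Pat m x y z) : Pat m x z y := by
  rcases h with ⟨h1, h2⟩ | ⟨h1, h2⟩ | ⟨h1, h2⟩
  · exact Or.inr (Or.inl ⟨h1, h2⟩)
  · exact Or.inl ⟨h1, h2⟩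
  · exact Or.inr (Or.inr ⟨h1.symm, h1 ▸ h2⟩)

lemma pat_of_mem {P : Type*} {L : Set (Set P)} {m : ℕ} {a b c : P}
    (hab : a ≠ b) (hac : a ≠ c) (hbc : b ≠ c) {A B C : ZMod m}
    (h : ({(a, A), (b, B), (c, C)} : Set (P × ZMod m)) ∈ weaveLines m L) :
    Pat m A B C := by
  obtain ⟨a', b', c', i', j', k', -, hpat, heq⟩ := h
  have hA : ((a, A) : P × ZMod m) ∈ ({(a', i'), (b', j'), (c', k')} : Set _) := by
    rw [← heq]; simp
  have hB : ((b, B) : P × ZMod m) ∈ ({(a', i'), (b', j'), (c', k')} : Set _) := by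
    rw [← heq]; simp
  have hC : ((c, C) : P × ZMod m) ∈ ({(a', i'), (b', j'), (c', k')} : Set _) := by
    rw [← heq]; simp
  simp only [Set.mem_insert_iff, Set.mem_singleton_iff, Prod.mk.injEq] at hA hB hC
  rcases hA with ⟨h1, h2⟩ | ⟨h1, h2⟩ | ⟨h1, h2⟩ <;>
    rcases hB with ⟨h3, h4⟩ | ⟨h3, h4⟩ | ⟨h3, h4⟩ <;>
      rcases hC with ⟨h5, h6⟩ | ⟨h5, h6⟩ | ⟨h5, h6⟩ <;>
        subst_vars <;>
          first
            | exact absurd rfl hab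
            | exact absurd rfl hac
            | exact absurd rfl hbc
            | exact hpat
            | exact pat_swap12 hpat
            | exact pat_swap23 hpat
            | exact pat_swap12 (pat_swap23 hpat)
            | exact pat_swap23 (pat_swap12 hpat)
            | exact pat_swap12 (pat_swap23 (pat_swap12 hpat))

lemma no_case2 {m : ℕ} (hm : 3 < m) (α β γ : ZMod m → ZMod m)
    (hβ : Function.Injective β)
    (c1 : ∀ i, Pat m (α i) (β i) (γ (i + 1)))
    (c2 : ∀ i, Pat m (α i) (β (i + 1)) (γ i))
    (c3 : ∀ i, Pat m (α (i + 1)) (β i) (γ i))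
    (i : ZMod m) (h2 : α i = β i - 1) : False := by
  obtain ⟨n1, n2, n3⟩ := zmod_ne m hm
  have hB : β i = α i + 1 := by linear_combination -h2
  rcases c2 i with ⟨g1, g2⟩ | ⟨g1, g2⟩ | ⟨g1, g2⟩
  · -- g1 : α i = β (i+1), g2 : α i = γ i - 1
    have hC : γ i = α i + 1 := by linear_combination -g2
    rcases c3 i with ⟨e1, e2⟩ | ⟨e1, e2⟩ | ⟨e1, e2⟩
    · exact n1 (by linear_combination e2 - e1 + hC - hB)
    · exact n1 (by linear_combination e2 - e1 + hB - hC)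
    · have hA' : α (i + 1) = α i + 2 := by linear_combination hB - e2
      rcases c1 (i + 1) with ⟨f1, f2⟩ | ⟨f1, f2⟩ | ⟨f1, f2⟩
      · exact n2 (by linear_combination f1 - g1 - hA')
      · exact n3 (by linear_combination f2 - g1 - hA')
      · exact n1 (by linear_combination -f2 - hA' - g1)
  · -- g1 : α i = γ i, g2 : α i = β (i+1) - 1
    have hbb : β (i + 1) = β i := by linear_combination h2 - g2
    have hii := hβ hbb
    exact n1 (by linear_combination hii)
  · -- g1 : β (i+1) = γ i, g2 : β (i+1) = α i - 1
    have hC : γ i = α i - 1 := by linear_combination g2 - g1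
    rcases c3 i with ⟨e1, e2⟩ | ⟨e1, e2⟩ | ⟨e1, e2⟩
    · exact n3 (by linear_combination e2 - e1 - hB + hC)
    · exact n1 (by linear_combination e1 - e2 + hC - hB)
    · exact n2 (by linear_combination e1 - hB + hC)

lemma core {m : ℕ} (hm : 3 < m) (α β γ : ZMod m → ZMod m)
    (hα : Function.Injective α) (hβ : Function.Injective β)
    (c1 : ∀ i, Pat m (α i) (β i) (γ (i + 1)))
    (c2 : ∀ i, Pat m (α i) (β (i + 1)) (γ i))
    (c3 : ∀ i, Pat m (α (i + 1)) (β i) (γ i))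
    (i : ZMod m) : α i = β i ∧ α i = γ i ∧ α (i + 1) = α i + 1 := by
  obtain ⟨n1, n2, n3⟩ := zmod_ne m hm
  rcases c1 i with ⟨d1, d2⟩ | ⟨d1, d2⟩ | ⟨d1, d2⟩
  · -- d1 : α i = β i, d2 : α i = γ (i+1) - 1
    have hC' : γ (i + 1) = α i + 1 := by linear_combination -d2
    rcases c3 i with ⟨e1, e2⟩ | ⟨e1, e2⟩ | ⟨e1, e2⟩
    · have hii := hα (e1.trans d1.symm)
      exact (n1 (by linear_combination hii)).elim
    · -- e1 : α (i+1) = γ i, e2 : α (i+1) = β i - 1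
      have hC : γ i = α i - 1 := by linear_combination e2 - e1 - d1
      rcases c2 i with ⟨g1, g2⟩ | ⟨g1, g2⟩ | ⟨g1, g2⟩
      · exact (n2 (by linear_combination g2 + hC)).elim
      · exact (n1 (by linear_combination g1 + hC)).elim
      · have hA' : α (i + 1) = α i - 1 := e1.trans hC
        rcases c2 (i + 1) with ⟨k1, k2⟩ | ⟨k1, k2⟩ | ⟨k1, k2⟩
        · exact (n1 (by linear_combination hA' - k2 - hC')).elim
        · exact (n2 (by linear_combination hA' - hC' - k1)).elim
        · exact (n3 (by linear_combination k2 - k1 + hA' - hC')).elim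
    · exact ⟨d1, d1.trans e1, by linear_combination -e2 - d1⟩
  · exact (no_case2 hm α β γ hβ c1 c2 c3 i d2).elim
  · exact (no_case2 hm β α γ hα (fun j => pat_swap12 (c1 j))
      (fun j => pat_swap12 (c3 j)) (fun j => pat_swap12 (c2 j)) i d2).elim

lemma ncard3_distinct {P : Type*} {a b c : P} (h : ({a, b, c} : Set P).ncard = 3) :
    a ≠ b ∧ a ≠ c ∧ b ≠ c := by
  refine ⟨?_, ?_, ?_⟩ <;> intro he <;> subst he
  · have h2 : ({a, a, c} : Set P) = {a, c} := by ext x; simp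
    rw [h2] at h
    have : ({a, c} : Set P).ncard ≤ 2 := by
      calc ({a, c} : Set P).ncard ≤ ({c} : Set P).ncard + 1 := Set.ncard_insert_le _ _
        _ ≤ 2 := by simp
    omega
  · have h2 : ({a, b, a} : Set P) = {a, b} := by ext x; simp; try tauto
    rw [h2] at h
    have : ({a, b} : Set P).ncard ≤ 2 := by
      calc ({a, b} : Set P).ncard ≤ ({b} : Set P).ncard + 1 := Set.ncard_insert_le _ _
        _ ≤ 2 := by simp
    omega
  · have h2 : ({a, b, b} : Set P) = {a, b} := by ext x; simp; try tauto
    rw [h2] at h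
    have : ({a, b} : Set P).ncard ≤ 2 := by
      calc ({a, b} : Set P).ncard ≤ ({b} : Set P).ncard + 1 := Set.ncard_insert_le _ _
        _ ≤ 2 := by simp
    omega


/-- Let `m > 3` and let `F` be an automorphism of `Π(m,M)` with
`F({a} × C_m) = {a} × C_m` for every point `a` of `M`.  If `{a,b,c}` is a line of `M`
and `F(a,i₀) = (a,j₀)`, then `F(x,i) = (x, i + (j₀ - i₀))` for every `x ∈ {a,b,c}`
and every `i ∈ C_m`. -/
theorem weave_auto_fiber {P : Type*} (L : Set (Set P)) (m : ℕ)
    (hM : IsPSTS L) (hm : 3 < m)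
    (F : (P × ZMod m) ≃ (P × ZMod m)) (hF : IsAuto (weaveLines m L) F)
    (hfix : ∀ a : P, F '' ({a} ×ˢ (Set.univ : Set (ZMod m))) = {a} ×ˢ Set.univ)
    (a b c : P) (hline : ({a, b, c} : Set P) ∈ L)
    (i0 j0 : ZMod m) (ha : F (a, i0) = (a, j0)) :
    ∀ x ∈ ({a, b, c} : Set P), ∀ i : ZMod m, F (x, i) = (x, i + (j0 - i0)) := by
  obtain ⟨hab, hac, hbc⟩ := ncard3_distinct (hM.1 _ hline)
  have hfst : ∀ (x : P) (t : ZMod m), (F (x, t)).1 = x := by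
    intro x t
    have hmem : F (x, t) ∈ ({x} ×ˢ (Set.univ : Set (ZMod m))) := by
      rw [← hfix x]
      exact ⟨(x, t), by simp, rfl⟩
    exact hmem.1
  set α := fun t : ZMod m => (F (a, t)).2 with hαdef
  set β := fun t : ZMod m => (F (b, t)).2 with hβdef
  set γ := fun t : ZMod m => (F (c, t)).2 with hγdef
  have hFa : ∀ t : ZMod m, F (a, t) = (a, α t) := fun t => Prod.ext (hfst a t) rfl
  have hFb : ∀ t : ZMod m, F (b, t) = (b, β t) := fun t => Prod.ext (hfst b t) rfl
  have hFc : ∀ t : ZMod m, F (c, t) = (c, γ t) := fun t => Prod.ext (hfst c t) rfl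
  have hαinj : Function.Injective α := fun s t h =>
    congrArg Prod.snd (F.injective (show F (a, s) = F (a, t) by rw [hFa s, hFa t, h]))
  have hβinj : Function.Injective β := fun s t h =>
    congrArg Prod.snd (F.injective (show F (b, s) = F (b, t) by rw [hFb s, hFb t, h]))
  have lineA : ∀ i : ZMod m,
      ({(a, i), (b, i), (c, i + 1)} : Set (P × ZMod m)) ∈ weaveLines m L :=
    fun i => ⟨a, b, c, i, i, i + 1, hline, Or.inl ⟨rfl, by ring⟩, rfl⟩
  have lineB : ∀ i : ZMod m,
      ({(a, i), (b, i + 1), (c, i)} : Set (P × ZMod m)) ∈ weaveLines m L :=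
    fun i => ⟨a, b, c, i, i + 1, i, hline, Or.inr (Or.inl ⟨rfl, by ring⟩), rfl⟩
  have lineC : ∀ i : ZMod m,
      ({(a, i + 1), (b, i), (c, i)} : Set (P × ZMod m)) ∈ weaveLines m L :=
    fun i => ⟨a, b, c, i + 1, i, i, hline, Or.inr (Or.inr ⟨rfl, by ring⟩), rfl⟩
  have c1 : ∀ i : ZMod m, Pat m (α i) (β i) (γ (i + 1)) := by
    intro i
    have h := hF.1 _ (lineA i)
    rw [Set.image_insert_eq, Set.image_insert_eq, Set.image_singleton,
      hFa, hFb, hFc] at h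
    exact pat_of_mem hab hac hbc h
  have c2 : ∀ i : ZMod m, Pat m (α i) (β (i + 1)) (γ i) := by
    intro i
    have h := hF.1 _ (lineB i)
    rw [Set.image_insert_eq, Set.image_insert_eq, Set.image_singleton,
      hFa, hFb, hFc] at h
    exact pat_of_mem hab hac hbc h
  have c3 : ∀ i : ZMod m, Pat m (α (i + 1)) (β i) (γ i) := by
    intro i
    have h := hF.1 _ (lineC i)
    rw [Set.image_insert_eq, Set.image_insert_eq, Set.image_singleton,
      hFa, hFb, hFc] at h
    exact pat_of_mem hab hac hbc h
  have key := core hm α β γ hαinj hβinj c1 c2 c3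
  have step : ∀ i : ZMod m, α (i + 1) = α i + 1 := fun i => (key i).2.2
  have hα0 : α i0 = j0 := by
    have h : (a, j0) = (a, α i0) := by rw [← ha, hFa]
    exact (congrArg Prod.snd h).symm
  haveI : NeZero m := ⟨by omega⟩
  have natstep : ∀ k : ℕ, α (i0 + k) = j0 + k := by
    intro k
    induction k with
    | zero => simpa using hα0
    | succ n ih =>
      have e : (i0 + ((n + 1 : ℕ) : ZMod m)) = (i0 + (n : ℕ)) + 1 := by push_cast; ring
      rw [e, step, ih]; push_cast; ring
  have alli : ∀ i : ZMod m, α i = i + (j0 - i0) := by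
    intro i
    have hv : (((i - i0).val : ℕ) : ZMod m) = i - i0 := by
      rw [ZMod.natCast_val, ZMod.cast_id]
    have e : i0 + (((i - i0).val : ℕ) : ZMod m) = i := by rw [hv]; ring
    calc α i = α (i0 + (((i - i0).val : ℕ) : ZMod m)) := by rw [e]
      _ = j0 + (((i - i0).val : ℕ) : ZMod m) := natstep _
      _ = i + (j0 - i0) := by rw [hv]; ring
  intro x hx i
  simp only [Set.mem_insert_iff, Set.mem_singleton_iff] at hx
  rcases hx with rfl | rfl | rfl
  · rw [hFa, alli]
  · have hb : β i = i + (j0 - i0) := by rw [← (key i).1, alli]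
    rw [hFb, hb]
  · have hc : γ i = i + (j0 - i0) := by rw [← (key i).2.1, alli]
    rw [hFc, hc]
end

section
/- Let M be a partial Steiner triple system which contains a hyperplane H that is an anti-clique (equivalently: every line of M meets H in exactly one point). Then for any two elements ε1, ε2 of an abelian group G, the convolutions M⋈_{ε1} G and M⋈_{ε2} G are isomorphic. -/
/-- Two points are collinear when some line contains both. -/
def Coll {P : Type*} (L : Set (Set P)) (p q : P) : Prop :=
  ∃ l ∈ L, p ∈ l ∧ q ∈ l

/-- `H` is a hyperplane: every line meets `H`. -/
def IsHyperplane {P : Type*} (L : Set (Set P)) (H : Set P) : Prop :=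
  ∀ l ∈ L, ∃ p ∈ l, p ∈ H

/-- `H` is an anti-clique: no two distinct points of `H` are collinear. -/
def IsAntiClique {P : Type*} (L : Set (Set P)) (H : Set P) : Prop :=
  ∀ p ∈ H, ∀ q ∈ H, p ≠ q → ¬ Coll L p q

/-- If a PSTS `M` contains a hyperplane which is an anti-clique, then for any
`ε₁, ε₂` in an abelian group `G` the convolutions `M ⋈_{ε₁} G` and `M ⋈_{ε₂} G`
are isomorphic. -/
theorem conv_iso_of_hyperplane {P G : Type*} [AddCommGroup G]
    (L : Set (Set P)) (hM : IsPSTS L) (H : Set P)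
    (hH : IsHyperplane L H) (hA : IsAntiClique L H) (ε1 ε2 : G) :
    ∃ f : P × G ≃ P × G, IsIso (convLines ε1 L) (convLines ε2 L) f := by
  classical
  set δ := ε2 - ε1 with hδ
  set c : P → G := fun p => if p ∈ H then δ else 0 with hc
  have key : ∀ x y z : P, ({x, y, z} : Set P) ∈ L → c x + c y + c z = δ := by
    intro x y z hl
    have h3 := hM.1 _ hl
    have hxy : x ≠ y := by
      rintro rfl
      have : ({x, z} : Set P).ncard ≤ 2 := by
        refine (Set.ncard_insert_le _ _).trans ?_
        simp [Set.ncard_singleton]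
      simp only [Set.insert_idem] at h3
      omega
    have hxz : x ≠ z := by
      rintro rfl
      have : ({x, y} : Set P).ncard ≤ 2 := by
        refine (Set.ncard_insert_le _ _).trans ?_
        simp [Set.ncard_singleton]
      rw [show ({x, y, x} : Set P) = {x, y} by
        ext a; simp; tauto] at h3
      omega
    have hyz : y ≠ z := by
      rintro rfl
      have : ({x, y} : Set P).ncard ≤ 2 := by
        refine (Set.ncard_insert_le _ _).trans ?_
        simp [Set.ncard_singleton]
      simp only [Set.pair_eq_singleton] at h3
      omega
    have collxy : Coll L x y := ⟨_, hl, by simp, by simp⟩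
    have collxz : Coll L x z := ⟨_, hl, by simp, by simp⟩
    have collyz : Coll L y z := ⟨_, hl, by simp, by simp⟩
    by_cases hx : x ∈ H <;> by_cases hy : y ∈ H <;> by_cases hz : z ∈ H
    · exact absurd collxy (hA x hx y hy hxy)
    · exact absurd collxy (hA x hx y hy hxy)
    · exact absurd collxz (hA x hx z hz hxz)
    · simp [hc, hx, hy, hz]
    · exact absurd collyz (hA y hy z hz hyz)
    · simp [hc, hx, hy, hz]
    · simp [hc, hx, hy, hz]
    · obtain ⟨p, hp, hpH⟩ := hH _ hl
      simp only [Set.mem_insert_iff, Set.mem_singleton_iff] at hp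
      rcases hp with rfl | rfl | rfl <;> [exact absurd hpH hx; exact absurd hpH hy;
        exact absurd hpH hz]
  refine ⟨⟨fun p => (p.1, p.2 + c p.1), fun p => (p.1, p.2 - c p.1), ?_, ?_⟩, ?_, ?_⟩
  · intro p; simp
  · intro p; simp
  · rintro l ⟨x, y, z, α, β, γ, hl, hsum, rfl⟩
    refine ⟨x, y, z, α + c x, β + c y, γ + c z, hl, ?_, ?_⟩
    · have := key x y z hl
      rw [show α + c x + (β + c y) + (γ + c z) = (α + β + γ) + (c x + c y + c z) by abel,
        hsum, this, hδ]
      abel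
    · simp [Set.image_insert_eq]
  · rintro l ⟨x, y, z, α, β, γ, hl, hsum, rfl⟩
    refine ⟨x, y, z, α - c x, β - c y, γ - c z, hl, ?_, ?_⟩
    · have := key x y z hl
      rw [show α - c x + (β - c y) + (γ - c z) = (α + β + γ) - (c x + c y + c z) by abel,
        hsum, this, hδ]
      abel
    · simp [Set.image_insert_eq, Equiv.symm]
end

section
/- Let M be a partial Steiner triple system which contains a hyperplane H that is an anti-clique (every line of M meets H in exactly one point). Then Π(3,M) is isomorphic to the convolution M⋈_0 C_3 of M with the cyclic group C_3 = ℤ/3ℤ. -/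
lemma zmod3_forward : ∀ i j k : ZMod 3,
    ((i = j ∧ i = k - 1) ∨ (i = k ∧ i = j - 1) ∨ (j = k ∧ j = i - 1)) →
    ((1 - i) + -j + -k = 0 ∧ -i + (1 - j) + -k = 0 ∧ -i + -j + (1 - k) = 0) := by
  decide

lemma zmod3_back : ∀ u v w : ZMod 3, u + v + w = 0 →
    (((1 - u) = -v ∧ (1 - u) = -w - 1) ∨ ((1 - u) = -w ∧ (1 - u) = -v - 1) ∨
        (-v = -w ∧ -v = (1 - u) - 1)) ∧
    ((-u = 1 - v ∧ -u = -w - 1) ∨ (-u = -w ∧ -u = (1 - v) - 1) ∨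
        ((1 - v) = -w ∧ (1 - v) = -u - 1)) ∧
    ((-u = -v ∧ -u = (1 - w) - 1) ∨ (-u = 1 - w ∧ -u = -v - 1) ∨
        (-v = (1 - w) ∧ -v = -u - 1)) := by
  decide

/-- If a PSTS `M` contains a hyperplane which is an anti-clique, then
`Π(3,M) ≅ M ⋈₀ C₃`. -/
theorem weave3_iso_conv0 {P : Type*} (L : Set (Set P)) (hM : IsPSTS L)
    (H : Set P) (hH : IsHyperplane L H) (hA : IsAntiClique L H) :
    ∃ f : P × ZMod 3 ≃ P × ZMod 3,
      IsIso (weaveLines 3 L) (convLines (0 : ZMod 3) L) f := by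
  classical
  set g : P × ZMod 3 → P × ZMod 3 :=
    fun q => (q.1, if q.1 ∈ H then 1 - q.2 else -q.2) with hgdef
  have hinv : ∀ q, g (g q) = q := by
    rintro ⟨p, i⟩
    by_cases h : p ∈ H <;> simp [g, h]
  -- exactly one point of each line lies in H
  have key : ∀ a b c : P, ({a, b, c} : Set P) ∈ L →
      (a ∈ H ∧ b ∉ H ∧ c ∉ H) ∨ (b ∈ H ∧ a ∉ H ∧ c ∉ H) ∨
      (c ∈ H ∧ a ∉ H ∧ b ∉ H) := by
    intro a b c hl
    have h3 := hM.1 _ hl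
    have h2 : ∀ x y : P, ({x, y} : Set P).ncard ≤ 2 :=
      fun x y => le_trans (Set.ncard_insert_le x {y}) (by simp)
    have hab : a ≠ b := by
      rintro rfl
      have he : ({a, a, c} : Set P) = {a, c} := by ext x; simp
      rw [he] at h3; have := h2 a c; omega
    have hac : a ≠ c := by
      rintro rfl
      have he : ({a, b, a} : Set P) = {a, b} := by ext x; simp; tauto
      rw [he] at h3; have := h2 a b; omega
    have hbc : b ≠ c := by
      rintro rfl
      have he : ({a, b, b} : Set P) = {a, b} := by ext x; simp
      rw [he] at h3; have := h2 a b; omega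
    have notboth : ∀ x y : P, x ∈ ({a, b, c} : Set P) → y ∈ ({a, b, c} : Set P) →
        x ≠ y → x ∈ H → y ∉ H :=
      fun x y hx hy hxy hxH hyH => hA x hxH y hyH hxy ⟨_, hl, hx, hy⟩
    obtain ⟨p, hp, hpH⟩ := hH _ hl
    simp only [Set.mem_insert_iff, Set.mem_singleton_iff] at hp
    rcases hp with rfl | rfl | rfl
    · exact Or.inl ⟨hpH, notboth _ _ (by simp) (by simp) hab hpH,
        notboth _ _ (by simp) (by simp) hac hpH⟩
    · exact Or.inr (Or.inl ⟨hpH, notboth _ _ (by simp) (by simp) hab.symm hpH,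
        notboth _ _ (by simp) (by simp) hbc hpH⟩)
    · exact Or.inr (Or.inr ⟨hpH, notboth _ _ (by simp) (by simp) hac.symm hpH,
        notboth _ _ (by simp) (by simp) hbc.symm hpH⟩)
  refine ⟨⟨g, g, hinv, hinv⟩, ?_, ?_⟩
  · -- forward direction
    rintro l ⟨a, b, c, i, j, k, hline, hpat, rfl⟩
    show g '' _ ∈ _
    have himg : g '' {(a, i), (b, j), (c, k)} = {g (a, i), g (b, j), g (c, k)} := by
      simp [Set.image_insert_eq]
    obtain ⟨s1, s2, s3⟩ := zmod3_forward i j k hpat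
    rcases key a b c hline with ⟨ha, hb, hc⟩ | ⟨hb, ha, hc⟩ | ⟨hc, ha, hb⟩
    · exact ⟨a, b, c, 1 - i, -j, -k, hline, s1, by rw [himg]; simp [g, ha, hb, hc]⟩
    · exact ⟨a, b, c, -i, 1 - j, -k, hline, s2, by rw [himg]; simp [g, ha, hb, hc]⟩
    · exact ⟨a, b, c, -i, -j, 1 - k, hline, s3, by rw [himg]; simp [g, ha, hb, hc]⟩
  · -- backward direction
    rintro l ⟨x, y, z, α, β, γ, hline, hsum, rfl⟩
    show g '' _ ∈ _
    have himg : g '' {(x, α), (y, β), (z, γ)} = {g (x, α), g (y, β), g (z, γ)} := by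
      simp [Set.image_insert_eq]
    obtain ⟨p1, p2, p3⟩ := zmod3_back α β γ hsum
    rcases key x y z hline with ⟨hx, hy, hz⟩ | ⟨hy, hx, hz⟩ | ⟨hz, hx, hy⟩
    · exact ⟨x, y, z, 1 - α, -β, -γ, hline, p1, by rw [himg]; simp [g, hx, hy, hz]⟩
    · exact ⟨x, y, z, -α, 1 - β, -γ, hline, p2, by rw [himg]; simp [g, hx, hy, hz]⟩
    · exact ⟨x, y, z, -α, -β, 1 - γ, hline, p3, by rw [himg]; simp [g, hx, hy, hz]⟩
end

section
/- Let M = (S, ℒ) be a partial Steiner triple system which is a (ν, r, b, 3)-configuration (ν points, every point on exactly r > 0 lines, b lines, every line with exactly 3 points), and let H ⊆ S be an anti-clique. Then H is a hyperplane of M if and only if r·|H| = b, equivalently if and only if 3·|H| = ν. -/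
/-- Let `M` be a PSTS which is a `(ν,r,b,3)`-configuration with `r > 0` and let `H`
be an anti-clique of `M`.  Then `H` is a hyperplane iff `r·|H| = b`, equivalently iff
`3·|H| = ν`. -/
theorem antiClique_hyperplane_iff {P : Type*} [Finite P]
    (L : Set (Set P)) (ν r b : ℕ) (hM : IsPSTS L)
    (hconf : IsConfiguration L ν r b) (hr : 0 < r)
    (H : Set P) (hA : IsAntiClique L H) :
    (IsHyperplane L H ↔ r * H.ncard = b) ∧
    (IsHyperplane L H ↔ 3 * H.ncard = ν) := by
  classical
  have instF : Fintype P := Fintype.ofFinite P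
  obtain ⟨hν, hr', hb, h3⟩ := hconf
  have hLfin : L.Finite := Set.toFinite L
  set F : Finset (Set P) := hLfin.toFinset with hF
  have hFcoe : (↑F : Set (Set P)) = L := hLfin.coe_toFinset
  have hmemF : ∀ l, l ∈ F ↔ l ∈ L := fun l => hLfin.mem_toFinset
  have hFcard : F.card = b := by
    rw [← hb, ← hFcoe, Set.ncard_coe_finset]
  -- lines through a point
  have hpt : ∀ p : P, (F.filter (fun l => p ∈ l)).card = r := by
    intro p
    have : ({l ∈ L | p ∈ l} : Set (Set P)) = ↑(F.filter (fun l => p ∈ l)) := by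
      ext l; simp [hmemF]
    have := hr' p
    rwa [‹({l ∈ L | p ∈ l} : Set (Set P)) = _›, Set.ncard_coe_finset] at this
  -- double counting: r * ν = 3 * b
  have hcount : r * ν = 3 * b := by
    have h1 : ∑ p : P, (F.filter (fun l => p ∈ l)).card
        = ∑ l ∈ F, (Finset.univ.filter (fun p : P => p ∈ l)).card := by
      simp only [Finset.card_filter]
      rw [Finset.sum_comm]
    have h2 : ∑ p : P, (F.filter (fun l => p ∈ l)).card = ν * r := by
      simp only [hpt, Finset.sum_const, Finset.card_univ, smul_eq_mul]
      rw [← hν, Nat.card_eq_fintype_card]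
    have h3' : ∑ l ∈ F, (Finset.univ.filter (fun p : P => p ∈ l)).card = b * 3 := by
      rw [← hFcard, Finset.card_eq_sum_ones F, Finset.sum_mul]
      refine Finset.sum_congr rfl fun l hl => ?_
      have hl3 := h3 l ((hmemF l).mp hl)
      have : (l : Set P) = ↑(Finset.univ.filter (fun p : P => p ∈ l)) := by
        ext p; simp
      rw [this, Set.ncard_coe_finset] at hl3
      simp [hl3]
    rw [mul_comm r ν, ← h2, h1, h3', mul_comm]
  -- lines meeting H
  set HF : Finset P := H.toFinset with hHF
  have hHcard : HF.card = H.ncard := (Set.ncard_eq_toFinset_card' H).symm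
  set G : Finset (Set P) := F.filter (fun l => ∃ p ∈ H, p ∈ l) with hG
  have hGU : G = HF.biUnion (fun p => F.filter (fun l => p ∈ l)) := by
    ext l
    simp only [hG, hHF, Finset.mem_filter, Finset.mem_biUnion, Set.mem_toFinset]
    tauto
  have hGcard : G.card = r * H.ncard := by
    rw [hGU, Finset.card_biUnion, ← hHcard]
    · simp [hpt, mul_comm]
    · intro p hp q hq hpq
      simp only [Finset.disjoint_left, Finset.mem_filter]
      rintro l ⟨hlF, hpl⟩ ⟨_, hql⟩
      exact hA p (by simpa [hHF] using hp) q (by simpa [hHF] using hq) hpq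
        ⟨l, (hmemF l).mp hlF, hpl, hql⟩
  have key : IsHyperplane L H ↔ r * H.ncard = b := by
    constructor
    · intro hH
      have : G = F := by
        apply Finset.Subset.antisymm (Finset.filter_subset _ _)
        intro l hl
        obtain ⟨p, hpl, hpH⟩ := hH l ((hmemF l).mp hl)
        simp only [hG, Finset.mem_filter]
        exact ⟨hl, p, hpH, hpl⟩
      rw [← hGcard, this, hFcard]
    · intro hcard
      have hGF : G = F := by
        apply Finset.eq_of_subset_of_card_le (Finset.filter_subset _ _)
        rw [hFcard, hGcard, hcard]
      intro l hl
      have : l ∈ G := by rw [hGF]; exact (hmemF l).mpr hl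
      simp only [hG, Finset.mem_filter] at this
      obtain ⟨_, p, hpH, hpl⟩ := this
      exact ⟨p, hpl, hpH⟩
  refine ⟨key, key.trans ⟨fun h1 => ?_, fun h2 => ?_⟩⟩
  · have h' : r * (3 * H.ncard) = r * ν := by rw [hcount, ← h1]; ring
    exact Nat.eq_of_mul_eq_mul_left hr h'
  · have h : r * (3 * H.ncard) = 3 * b := by rw [h2]; exact hcount
    have h' : 3 * (r * H.ncard) = 3 * b := by rw [← h]; ring
    exact Nat.eq_of_mul_eq_mul_left (by norm_num) h'
end

section
/- Let n > 1 and let AG(n,3) denote the affine space over GF(3) of dimension n, regarded as the partial Steiner triple system with point set (ℤ/3ℤ)^n whose lines are the sets {x, x+d, x+2d} for x, d ∈ (ℤ/3ℤ)^n with d ≠ 0. Then for no N does there exist an injective map φ from the points of Π(3, AG(n,3)) to the points (ℤ/3ℤ)^N of AG(N,3) mapping every line of Π(3, AG(n,3)) onto a line of AG(N,3); i.e. Π(3, AG(n,3)) is not embeddable into any affine space over GF(3). -/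
/-- The lines of the affine space `AG(n,3)`: the point set is `(ℤ/3ℤ)ⁿ` and the
lines are the sets `{x, x+d, x+2d}` with `d ≠ 0`. -/
def agLines (n : ℕ) : Set (Set (Fin n → ZMod 3)) :=
  { l | ∃ x d : Fin n → ZMod 3, d ≠ 0 ∧ l = {x, x + d, x + d + d} }

/-- If two sets of three pairwise-distinct elements coincide, the sums agree. -/
private lemma triple_sum {α : Type*} [AddCommGroup α] {p q r x y z : α}
    (hpq : p ≠ q) (hpr : p ≠ r) (hqr : q ≠ r)
    (h : ({p, q, r} : Set α) = {x, y, z}) : p + q + r = x + y + z := by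
  have hp : p = x ∨ p = y ∨ p = z := by
    have : p ∈ ({x, y, z} : Set α) := h ▸ (by simp)
    simpa using this
  have hq : q = x ∨ q = y ∨ q = z := by
    have : q ∈ ({x, y, z} : Set α) := h ▸ (by simp)
    simpa using this
  have hr : r = x ∨ r = y ∨ r = z := by
    have : r ∈ ({x, y, z} : Set α) := h ▸ (by simp)
    simpa using this
  rcases hp with rfl | rfl | rfl <;> rcases hq with rfl | rfl | rfl <;>
    rcases hr with rfl | rfl | rfl <;>
    first | (exact absurd rfl (by assumption)) | abel

/-- For `n > 1`, the configuration `Π(3, AG(n,3))` is not embeddable into any affine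
space `AG(N,3)` over `GF(3)`: there is no injective map from its points to
`(ℤ/3ℤ)^N` mapping every line onto a line of `AG(N,3)`. -/
theorem weave_AG_not_embeddable (n : ℕ) (hn : 1 < n) :
    ¬ ∃ (N : ℕ) (φ : ((Fin n → ZMod 3) × ZMod 3) → (Fin N → ZMod 3)),
        Function.Injective φ ∧
        ∀ l ∈ weaveLines 3 (agLines n), φ '' l ∈ agLines N := by
  rintro ⟨N, φ, hinj, hline⟩
  have h3Z : ∀ a : ZMod 3, a + a + a = 0 := by decide
  have h3V : ∀ y : Fin n → ZMod 3, y + y + y = 0 := by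
    intro y; funext t; simpa using h3Z (y t)
  have h3W : ∀ y : Fin N → ZMod 3, y + y + y = 0 := by
    intro y; funext t; simpa using h3Z (y t)
  -- key equation from the weave lines
  have key : ∀ a b c : Fin n → ZMod 3, a ≠ b → a ≠ c → b ≠ c → a + b + c = 0 →
      φ (a, 0) + φ (b, 0) + φ (c, 1) = 0 := by
    intro a b c hab hac hbc habc
    have hag : ({a, b, c} : Set (Fin n → ZMod 3)) ∈ agLines n := by
      refine ⟨a, b - a, ?_, ?_⟩
      · intro h
        exact hab (by linear_combination -h)
      · have h1 : a + (b - a) = b := by abel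
        have h2 : a + (b - a) + (b - a) = c := by linear_combination h3V b - habc
        rw [h2, h1]
    have hw : ({(a, (0 : ZMod 3)), (b, 0), (c, 1)} : Set _) ∈ weaveLines 3 (agLines n) :=
      ⟨a, b, c, 0, 0, 1, hag, Or.inl ⟨rfl, by decide⟩, rfl⟩
    obtain ⟨x, d, hd, hxd⟩ := hline _ hw
    rw [show φ '' {(a, (0 : ZMod 3)), (b, 0), (c, 1)} = {φ (a, 0), φ (b, 0), φ (c, 1)} by
      simp [Set.image_insert_eq]] at hxd
    have d1 : φ (a, (0 : ZMod 3)) ≠ φ (b, 0) := fun h => hab (congrArg Prod.fst (hinj h))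
    have d2 : φ (a, (0 : ZMod 3)) ≠ φ (c, 1) := fun h => hac (congrArg Prod.fst (hinj h))
    have d3 : φ (b, (0 : ZMod 3)) ≠ φ (c, 1) := fun h => hbc (congrArg Prod.fst (hinj h))
    have hsum := triple_sum d1 d2 d3 hxd
    rw [hsum]
    linear_combination h3W x + h3W d
  -- the constant shift between levels 0 and 1
  set v : Fin N → ZMod 3 :=
    φ ((0 : Fin n → ZMod 3), (1 : ZMod 3)) - φ (0, 0) with hv
  have hshift : ∀ p : Fin n → ZMod 3, φ (p, 1) = φ (p, 0) + v := by
    intro p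
    rcases eq_or_ne p 0 with rfl | hp
    · rw [hv]; abel
    have hnp : p ≠ -p := by
      intro h
      apply hp
      linear_combination h3V p - h
    have h0p : (0 : Fin n → ZMod 3) ≠ p := Ne.symm hp
    have h0np : (0 : Fin n → ZMod 3) ≠ -p := fun h => hp (by linear_combination h)
    have hnp0 : -p ≠ 0 := fun h => hp (by linear_combination -h)
    have eq2 := key p (-p) 0 hnp hp hnp0 (by abel)
    have eq3 := key (-p) 0 p hnp0 (Ne.symm hnp) h0p (by abel)
    rw [hv]
    linear_combination eq3 - eq2
  -- all level-0 line sums are the constant -v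
  have hC : ∀ a b c : Fin n → ZMod 3, a ≠ b → a ≠ c → b ≠ c → a + b + c = 0 →
      φ (a, 0) + φ (b, 0) + φ (c, 0) + v = 0 := by
    intro a b c hab hac hbc habc
    have hk := key a b c hab hac hbc habc
    have hs := hshift c
    linear_combination hk - hs
  -- a plane inside AG(n,3), using n > 1
  set i0 : Fin n := ⟨0, by omega⟩ with hi0
  set i1 : Fin n := ⟨1, by omega⟩ with hi1
  have hi01 : i1 ≠ i0 := by simp [hi0, hi1, Fin.ext_iff]
  set ι : ZMod 3 × ZMod 3 → (Fin n → ZMod 3) :=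
    fun q t => if t = i0 then q.1 else if t = i1 then q.2 else 0 with hι
  have hι_inj : ∀ q r : ZMod 3 × ZMod 3, ι q = ι r → q = r := by
    intro q r h
    have h0 := congrFun h i0
    have h1 := congrFun h i1
    simp [hι, hi01] at h0 h1
    exact Prod.ext h0 h1
  have hι_add : ∀ q r : ZMod 3 × ZMod 3, ι (q + r) = ι q + ι r := by
    intro q r
    funext t
    simp only [hι, Pi.add_apply, Prod.fst_add, Prod.snd_add]
    split_ifs <;> simp
  have hι_zero : ι 0 = 0 := by
    funext t
    simp only [hι]
    split_ifs <;> rfl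
  set F : ZMod 3 × ZMod 3 → (Fin N → ZMod 3) := fun q => φ (ι q, 0) with hF
  have hC' : ∀ a b c : ZMod 3 × ZMod 3, a ≠ b → a ≠ c → b ≠ c → a + b + c = 0 →
      F a + F b + F c + v = 0 := by
    intro a b c hab hac hbc habc
    refine hC (ι a) (ι b) (ι c) (fun h => hab (hι_inj _ _ h))
      (fun h => hac (hι_inj _ _ h)) (fun h => hbc (hι_inj _ _ h)) ?_
    rw [← hι_add, ← hι_add, habc, hι_zero]
  have hL2 := hC' (0, 0) (0, 1) (0, 2) (by decide) (by decide) (by decide) (by decide)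
  have hL3 := hC' (0, 0) (1, 1) (2, 2) (by decide) (by decide) (by decide) (by decide)
  have hL4 := hC' (0, 0) (1, 2) (2, 1) (by decide) (by decide) (by decide) (by decide)
  have hM2 := hC' (0, 1) (1, 1) (2, 1) (by decide) (by decide) (by decide) (by decide)
  have hM3 := hC' (0, 2) (1, 2) (2, 2) (by decide) (by decide) (by decide) (by decide)
  have hv0 : v = 0 := by
    linear_combination hL2 + hL3 + hL4 - hM2 - hM3 - h3W (F (0, 0))
  have heq : φ ((0 : Fin n → ZMod 3), (1 : ZMod 3)) = φ (0, 0) := by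
    have := hshift 0
    rw [hv0] at this
    simpa using this
  have : ((0 : Fin n → ZMod 3), (1 : ZMod 3)) = (0, 0) := hinj heq
  have : (1 : ZMod 3) = 0 := congrArg Prod.snd this
  exact absurd this (by decide)
end
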